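/- arXiv:2512.01239 — 5 statements merged into one kernel-verified Lean document; each statement's English description precedes it below -/
import Mathlib

section
/- Let f : {0,1}^n → ℝ satisfy the bounded differences property: changing any one coordinate changes the value of f by at most 1/n. If X_1, ..., X_n are independent random variables taking values in {0,1} on a probability space (Ω, ℙ), then for every ε > 0, ℙ(|f(X_1,...,X_n) − 𝔼[f(X_1,...,X_n)]| > ε) ≤ 2·exp(−2nε²). -/
/-!
Conditioning on the first coordinate splits `f - 𝔼 f` into the centred conditional mean, a
function of one coordinate whose values lie in an interval of length `c 0`, and a deviation on the
fibre, which is a function of the remaining coordinates with the same bounded differences. By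
Hoeffding's lemma and induction on the number of coordinates, `f - 𝔼 f` is sub-Gaussian with
variance proxy `∑ i, (c i / 2) ^ 2`, which is `1 / (4 n)` for `c i = 1 / n`; the Chernoff bound
applied to `f - 𝔼 f` and to its negative gives the two tails.
-/

open MeasureTheory ProbabilityTheory Real
open scoped NNReal

theorem integral_pi_fin_succ {α : Type*} [MeasurableSpace α] {n : ℕ}
    (μ : Fin (n + 1) → Measure α) [∀ i, SigmaFinite (μ i)]
    {g : (Fin (n + 1) → α) → ℝ} (hg : Integrable g (Measure.pi μ)) :
    ∫ x, g x ∂Measure.pi μ =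
      ∫ a, ∫ y, g (Fin.cons a y) ∂Measure.pi (fun i ↦ μ i.succ) ∂μ 0 := by
  have e := (measurePreserving_piFinSuccAbove μ 0).symm
  rw [← e.integral_comp', integral_prod]
  · simp [Fin.insertNthEquiv]
  · exact (e.integrable_comp_emb (MeasurableEquiv.measurableEmbedding _)).mpr hg

lemma ProbabilityTheory.HasSubgaussianMGF.measure_abs_ge_le {Ω : Type*} [MeasurableSpace Ω]
    {μ : Measure Ω} [IsFiniteMeasure μ] {X : Ω → ℝ} {c : ℝ≥0} (h : HasSubgaussianMGF X c μ)
    {ε : ℝ} (hε : 0 ≤ ε) :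
    μ.real {ω | ε ≤ |X ω|} ≤ 2 * exp (-ε ^ 2 / (2 * c)) := by
  calc μ.real {ω | ε ≤ |X ω|} ≤ μ.real ({ω | ε ≤ X ω} ∪ {ω | ε ≤ (-X) ω}) :=
        measureReal_mono fun ω (hω : ε ≤ |X ω|) ↦ le_abs.mp hω
    _ ≤ μ.real {ω | ε ≤ X ω} + μ.real {ω | ε ≤ (-X) ω} := measureReal_union_le _ _
    _ ≤ 2 * exp (-ε ^ 2 / (2 * c)) := by
        linarith [h.measure_ge_le hε, h.neg.measure_ge_le hε]

section BoundedDifferences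

variable {α : Type*} [Finite α] [MeasurableSpace α] [MeasurableSingletonClass α]

lemma hasSubgaussianMGF_sub_integral_of_abs_sub_le (μ : Measure α) [IsProbabilityMeasure μ]
    {h : α → ℝ} {c : ℝ≥0} (hh : ∀ a b, |h a - h b| ≤ c) :
    HasSubgaussianMGF (fun a ↦ h a - ∫ a, h a ∂μ) ((c / 2) ^ 2) μ := by
  have := nonempty_of_isProbabilityMeasure μ
  obtain ⟨a₀, ha₀⟩ := Finite.exists_min h
  have h_range : ∀ a, h a ∈ Set.Icc (h a₀) (h a₀ + c) := fun a ↦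
    ⟨ha₀ a, by linarith [le_abs_self (h a - h a₀), hh a a₀]⟩
  simpa using hasSubgaussianMGF_of_mem_Icc (measurable_of_finite h).aemeasurable
    (ae_of_all _ h_range)

lemma abs_integral_cons_sub_le {n : ℕ} (μ : Fin n → Measure α) [∀ i, IsProbabilityMeasure (μ i)]
    {f : (Fin (n + 1) → α) → ℝ} {c : ℝ} (hf : ∀ x a, |f x - f (Function.update x 0 a)| ≤ c)
    (a b : α) :
    |∫ y, f (Fin.cons a y) ∂Measure.pi μ - ∫ y, f (Fin.cons b y) ∂Measure.pi μ| ≤ c := by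
  rw [← integral_sub .of_finite .of_finite]
  refine abs_integral_le_integral_abs.trans ?_
  calc ∫ y, |f (Fin.cons a y) - f (Fin.cons b y)| ∂Measure.pi μ
      ≤ ∫ _, c ∂Measure.pi μ := by
        refine integral_mono .of_finite (integrable_const c) fun y ↦ ?_
        simpa [Fin.update_cons_zero] using hf (Fin.cons a y) b
    _ = c := by simp

theorem hasSubgaussianMGF_pi_of_boundedDifferences {n : ℕ} (μ : Fin n → Measure α)
    [∀ i, IsProbabilityMeasure (μ i)] (f : (Fin n → α) → ℝ) (c : Fin n → ℝ≥0)
    (hf : ∀ x i a, |f x - f (Function.update x i a)| ≤ c i) :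
    HasSubgaussianMGF (fun x ↦ f x - ∫ y, f y ∂Measure.pi μ) (∑ i, (c i / 2) ^ 2)
      (Measure.pi μ) := by
  induction n with
  | zero =>
    refine HasSubgaussianMGF.fun_zero.congr (ae_of_all _ fun x ↦ ?_)
    simp [Subsingleton.elim _ x]
  | succ n ih =>
    refine ⟨fun t ↦ .of_finite, fun t ↦ ?_⟩
    set ν := Measure.pi fun i : Fin n ↦ μ i.succ
    set h : α → ℝ := fun a ↦ ∫ y, f (Fin.cons a y) ∂ν
    set m := ∫ a, h a ∂μ 0
    have h_integral : ∫ x, f x ∂Measure.pi μ = m := integral_pi_fin_succ μ .of_finite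
    have h_fibre : ∀ a, HasSubgaussianMGF (fun y ↦ f (Fin.cons a y) - h a)
        (∑ i : Fin n, (c i.succ / 2) ^ 2) ν := fun a ↦
      ih _ _ _ fun y i b ↦ by simpa [Fin.cons_update] using hf (Fin.cons a y) i.succ b
    have h_mean : HasSubgaussianMGF (fun a ↦ h a - m) ((c 0 / 2) ^ 2) (μ 0) :=
      hasSubgaussianMGF_sub_integral_of_abs_sub_le _
        (abs_integral_cons_sub_le _ fun x a ↦ hf x 0 a)
    calc mgf (fun x ↦ f x - ∫ y, f y ∂Measure.pi μ) (Measure.pi μ) t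
        = ∫ a, exp (t * (h a - m)) * mgf (fun y ↦ f (Fin.cons a y) - h a) ν t ∂μ 0 := by
          rw [mgf, integral_pi_fin_succ μ .of_finite, h_integral]
          congr 1 with a
          rw [mgf, ← integral_const_mul]
          congr 1 with y
          rw [← exp_add]
          ring_nf
      _ ≤ ∫ a, exp (t * (h a - m)) *
            exp ((∑ i : Fin n, (c i.succ / 2) ^ 2 : ℝ≥0) * t ^ 2 / 2) ∂μ 0 := by
          refine integral_mono .of_finite .of_finite fun a ↦ ?_
          gcongr
          exact (h_fibre a).mgf_le t
      _ = mgf (fun a ↦ h a - m) (μ 0) t *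
            exp ((∑ i : Fin n, (c i.succ / 2) ^ 2 : ℝ≥0) * t ^ 2 / 2) := integral_mul_const _ _
      _ ≤ exp (((c 0 / 2) ^ 2 : ℝ≥0) * t ^ 2 / 2) *
            exp ((∑ i : Fin n, (c i.succ / 2) ^ 2 : ℝ≥0) * t ^ 2 / 2) := by
          gcongr
          exact h_mean.mgf_le t
      _ = exp ((∑ i, (c i / 2) ^ 2 : ℝ≥0) * t ^ 2 / 2) := by
          rw [← exp_add, Fin.sum_univ_succ]
          push_cast
          ring_nf

end BoundedDifferences

theorem stmt_2_general {Ω : Type*} [MeasurableSpace Ω] (P : Measure Ω)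
    [IsProbabilityMeasure P] (n : ℕ)
    (f : (Fin n → Bool) → ℝ)
    (hf : ∀ (x : Fin n → Bool) (i : Fin n) (b : Bool),
      |f x - f (Function.update x i b)| ≤ 1 / n)
    (X : Fin n → Ω → Bool)
    (hmeas : ∀ i, Measurable (X i))
    (hindep : ProbabilityTheory.iIndepFun X P)
    (ε : ℝ) (hε : 0 < ε) :
    P {ω | ε < |f (fun i => X i ω) - ∫ ω', f (fun i => X i ω') ∂P|}
      ≤ ENNReal.ofReal (2 * Real.exp (-2 * n * ε ^ 2)) := by
  set T : Ω → Fin n → Bool := fun ω i ↦ X i ω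
  have hT : Measurable T := measurable_pi_lambda _ hmeas
  have h_law : P.map T = Measure.pi fun i ↦ P.map (X i) :=
    hindep.map_fun_eq_pi_map fun i ↦ (hmeas i).aemeasurable
  have h_mean : ∫ ω, f (T ω) ∂P = ∫ x, f x ∂P.map T :=
    (integral_map hT.aemeasurable (measurable_of_finite f).aestronglyMeasurable).symm
  have h_subG : HasSubgaussianMGF (fun ω ↦ f (T ω) - ∫ ω', f (T ω') ∂P)
      (∑ _ : Fin n, ((n : ℝ≥0)⁻¹ / 2) ^ 2) P := by
    rw [h_mean]
    refine HasSubgaussianMGF.of_map (X := fun x ↦ f x - _) hT.aemeasurable ?_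
    have := fun i ↦ Measure.isProbabilityMeasure_map (μ := P) (hmeas i).aemeasurable
    rw [h_law]
    exact hasSubgaussianMGF_pi_of_boundedDifferences _ f _ (by simpa using hf)
  calc P {ω | ε < |f (T ω) - ∫ ω', f (T ω') ∂P|}
      ≤ P {ω | ε ≤ |f (T ω) - ∫ ω', f (T ω') ∂P|} := measure_mono fun ω (hω : ε < _) ↦ hω.le
    _ = ENNReal.ofReal (P.real {ω | ε ≤ |f (T ω) - ∫ ω', f (T ω') ∂P|}) :=
        (ofReal_measureReal (measure_ne_top _ _)).symm
    _ ≤ ENNReal.ofReal (2 * exp (-ε ^ 2 / (2 * (∑ _ : Fin n, ((n : ℝ≥0)⁻¹ / 2) ^ 2 : ℝ≥0)))) :=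
        ENNReal.ofReal_le_ofReal (h_subG.measure_abs_ge_le hε.le)
    _ = ENNReal.ofReal (2 * exp (-2 * n * ε ^ 2)) := by
        rcases n.eq_zero_or_pos with rfl | hn
        · simp
        · congr 3
          push_cast
          simp only [Finset.sum_const, Finset.card_univ, Fintype.card_fin, nsmul_eq_mul]
          field_simp

/-- McDiarmid's inequality, special case: if `f : {0,1}^n → ℝ` changes by at most `1/n`
when one coordinate is changed, and `X 0, …, X (n-1)` are independent Boolean random
variables, then `P(|f(X) - E[f(X)]| > ε) ≤ 2 exp(-2 n ε²)`. -/
theorem stmt_2 {Ω : Type*} [MeasurableSpace Ω] (P : Measure Ω)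
    [IsProbabilityMeasure P] (n : ℕ) (hn : 0 < n)
    (f : (Fin n → Bool) → ℝ)
    (hf : ∀ (x : Fin n → Bool) (i : Fin n) (b : Bool),
      |f x - f (Function.update x i b)| ≤ 1 / n)
    (X : Fin n → Ω → Bool)
    (hmeas : ∀ i, Measurable (X i))
    (hindep : ProbabilityTheory.iIndepFun X P)
    (ε : ℝ) (hε : 0 < ε) :
    P {ω | ε < |f (fun i => X i ω) - ∫ ω', f (fun i => X i ω') ∂P|}
      ≤ ENNReal.ofReal (2 * Real.exp (-2 * n * ε ^ 2)) :=
  stmt_2_general P n f hf X hmeas hindep ε hε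
end

section
/- Let Ω = ℕ_{≥2}^ℕ with the product topology and T the left shift. Suppose Q ∈ Ω is such that: (i) for every finite word w over ℕ_{≥2}, the density d(w) of occurrences of w in Q exists; (ii) if d(w) = 0 then w does not occur in Q at all; and (iii) for every k, the sum of d(w) over all words w of length k equals 1. Then the sequence of empirical measures (1/N) Σ_{n=0}^{N−1} δ_{T^n Q} converges in the weak* topology to a T-invariant Borel probability measure μ on the orbit closure X of Q, Q is a generic point for μ, and μ assigns positive measure to every nonempty open subset of X. -/
/-!
The densities are nonnegative, the empty word has density `1`, and the density of a word `w` is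
the sum of the densities of its one-letter extensions: the empirical measures give `≥`, and
equality holds because for each length both sides sum to `1`. Such a consistent family is
realised by a probability measure `μ` on `ℕ → ℕ` by an interval coding: give `w` an interval of
length `dens w` tiled by the intervals of its extensions, and send `x ∈ [0, 1)` to the sequence
of letters read off the nested intervals containing it.

Every open set is a countable disjoint union of cylinders, on which the empirical measures
converge to `μ`; so `μ G ≤ liminf` of their masses of `G`, which is the portmanteau criterion
for weak convergence, and `Q` is generic. Genericity forces invariance, since Birkhoff averages
at `Q` and `T Q` have the same limits. The complement of the orbit closure is an open set of
empirical mass `0`, and an open set meeting the orbit closure contains the cylinder of a word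
occurring in `Q`, whose density is positive by hypothesis.
-/

open Filter MeasureTheory Topology Set Function
open scoped ENNReal BoundedContinuousFunction

section WordCylinder

variable {α : Type*}

def wordCylinder {k : ℕ} (w : Fin k → α) : Set (ℕ → α) := {s | ∀ i : Fin k, s i = w i}

lemma mem_wordCylinder_prefix (s : ℕ → α) (k : ℕ) : s ∈ wordCylinder fun i : Fin k => s i :=
  fun _ => rfl

lemma prefix_eq_of_mem_wordCylinder {s t : ℕ → α} {j k : ℕ}
    (h : t ∈ wordCylinder fun i : Fin k => s i) (hjk : j ≤ k) :
    (fun i : Fin j => t i) = fun i : Fin j => s i :=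
  funext fun i => h ⟨i, i.2.trans_le hjk⟩

lemma iUnion_wordCylinder_snoc {k : ℕ} (w : Fin k → α) :
    ⋃ a, wordCylinder (Fin.snoc w a : Fin (k + 1) → α) = wordCylinder w := by
  ext s
  simp only [mem_iUnion, wordCylinder, mem_ofPred_eq, Fin.forall_fin_succ', Fin.snoc_castSucc,
    Fin.val_castSucc, Fin.snoc_last, Fin.val_last]
  exact ⟨fun ⟨_, h, _⟩ => h, fun h => ⟨s k, h, rfl⟩⟩

lemma pairwise_disjoint_wordCylinder_snoc {k : ℕ} (w : Fin k → α) :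
    Pairwise (Disjoint on fun a => wordCylinder (Fin.snoc w a : Fin (k + 1) → α)) :=
  fun a b hab => disjoint_left.2 fun s ha hb => hab <| by
    simpa using (ha (Fin.last k)).symm.trans (hb (Fin.last k))

lemma measurableSet_wordCylinder [MeasurableSpace α] [MeasurableSingletonClass α] {k : ℕ}
    (w : Fin k → α) : MeasurableSet (wordCylinder w) := by
  simp only [wordCylinder, ofPred_forall]
  exact .iInter fun i => (measurableSet_singleton (w i)).preimage (measurable_pi_apply (i : ℕ))

lemma isOpen_wordCylinder [TopologicalSpace α] [DiscreteTopology α] {k : ℕ} (w : Fin k → α) :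
    IsOpen (wordCylinder w) := by
  simp only [wordCylinder, ofPred_forall]
  refine isOpen_iInter_of_finite fun i => ?_
  have hcont : Continuous fun s : ℕ → α => s i := continuous_apply (i : ℕ)
  exact (isOpen_discrete {w i}).preimage hcont

lemma IsOpen.exists_wordCylinder_subset [TopologicalSpace α] {U : Set (ℕ → α)} (hU : IsOpen U)
    {s : ℕ → α} (hs : s ∈ U) : ∃ k, (wordCylinder fun i : Fin k => s i) ⊆ U := by
  obtain ⟨I, u, hu, hsub⟩ := isOpen_pi_iff.1 hU s hs
  obtain ⟨K, hK⟩ := I.exists_le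
  refine ⟨K + 1, fun t ht => hsub fun n hn => ?_⟩
  have htn : t n = s n := ht ⟨n, Nat.lt_succ_of_le (hK n hn)⟩
  exact htn ▸ (hu n hn).2

/-- Around each point of `G`, take the shortest cylinder contained in `G`. -/
lemma IsOpen.exists_sUnion_wordCylinder [TopologicalSpace α] [Countable α] {G : Set (ℕ → α)}
    (hG : IsOpen G) : ∃ 𝒞 : Set (Set (ℕ → α)), 𝒞.Countable ∧ 𝒞.Pairwise Disjoint ∧
      (∀ C ∈ 𝒞, ∃ k, ∃ w : Fin k → α, C = wordCylinder w) ∧ ⋃₀ 𝒞 = G := by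
  let m : (ℕ → α) → ℕ := fun s => sInf {k | (wordCylinder fun i : Fin k => s i) ⊆ G}
  let C : (ℕ → α) → Set (ℕ → α) := fun s => wordCylinder fun i : Fin (m s) => s i
  have hCG : ∀ s ∈ G, C s ⊆ G := fun s hs => Nat.sInf_mem (hG.exists_wordCylinder_subset hs)
  have hC : ∀ s ∈ G, ∀ t ∈ C s, C t = C s := by
    intro s hs t ht
    have hmts : m t ≤ m s := Nat.sInf_le <| by
      rw [mem_ofPred_eq, prefix_eq_of_mem_wordCylinder ht le_rfl]; exact hCG s hs
    have hmst : m s ≤ m t := Nat.sInf_le <| by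
      rw [mem_ofPred_eq, ← prefix_eq_of_mem_wordCylinder ht hmts]; exact hCG t (hCG s hs ht)
    have hm : m t = m s := le_antisymm hmts hmst
    change (wordCylinder fun i : Fin (m t) => t i) = _
    rw [hm, prefix_eq_of_mem_wordCylinder ht le_rfl]
  refine ⟨C '' G, ?_, ?_, ?_, ?_⟩
  · refine (countable_range fun p : Σ k, Fin k → α => wordCylinder p.2).mono ?_
    rintro _ ⟨s, -, rfl⟩
    exact ⟨⟨m s, fun i => s i⟩, rfl⟩
  · rintro _ ⟨s, hs, rfl⟩ _ ⟨s', hs', rfl⟩ hne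
    refine disjoint_left.2 fun t ht ht' => hne ?_
    rw [← hC s hs t ht, hC s' hs' t ht']
  · rintro _ ⟨s, -, rfl⟩
    exact ⟨_, _, rfl⟩
  · refine Subset.antisymm (sUnion_subset ?_) fun s hs => ⟨C s, ⟨s, hs, rfl⟩, ?_⟩
    · rintro _ ⟨s, hs, rfl⟩; exact hCG s hs
    · exact mem_wordCylinder_prefix s (m s)

end WordCylinder

lemma tsum_le_liminf_measure_iUnion {Ω ι : Type*} [MeasurableSpace Ω] [Countable ι]
    {ν : ℕ → Measure Ω} {C : ι → Set Ω} (hd : Pairwise (Disjoint on C))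
    (hm : ∀ i, MeasurableSet (C i)) {c : ι → ℝ≥0∞}
    (hc : ∀ i, Tendsto (fun N => ν N (C i)) atTop (𝓝 (c i))) :
    ∑' i, c i ≤ liminf (fun N => ν N (⋃ i, C i)) atTop := by
  rw [ENNReal.tsum_eq_iSup_sum]
  refine iSup_le fun F => ?_
  rw [← (tendsto_finsetSum F fun i _ => hc i).liminf_eq]
  refine liminf_le_liminf (.of_forall fun N => ?_)
  rw [measure_iUnion hd hm]
  exact ENNReal.sum_le_tsum F

lemma measure_le_liminf_of_tendsto_wordCylinder {α : Type*} [TopologicalSpace α]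
    [MeasurableSpace α] [MeasurableSingletonClass α] [Countable α] {μ : Measure (ℕ → α)}
    {ν : ℕ → Measure (ℕ → α)}
    (h : ∀ k (w : Fin k → α),
      Tendsto (fun N => ν N (wordCylinder w)) atTop (𝓝 (μ (wordCylinder w))))
    {G : Set (ℕ → α)} (hG : IsOpen G) : μ G ≤ liminf (fun N => ν N G) atTop := by
  obtain ⟨𝒞, hcount, hdisj, hcyl, rfl⟩ := hG.exists_sUnion_wordCylinder
  have := hcount.to_subtype
  have hmeas : ∀ C : 𝒞, MeasurableSet (C : Set (ℕ → α)) := fun ⟨C, hC⟩ => by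
    obtain ⟨k, w, rfl⟩ := hcyl C hC
    exact measurableSet_wordCylinder w
  have hdisj' : Pairwise (Disjoint on fun C : 𝒞 => (C : Set (ℕ → α))) :=
    fun C C' hne => hdisj C.2 C'.2 (Subtype.coe_injective.ne hne)
  rw [sUnion_eq_iUnion, measure_iUnion hdisj' hmeas]
  refine tsum_le_liminf_measure_iUnion hdisj' hmeas fun ⟨C, hC⟩ => ?_
  obtain ⟨k, w, rfl⟩ := hcyl C hC
  exact h k w

lemma HasSum.hasSum_fiber_of_tsum_le {β γ : Type*} {f : β × γ → ℝ} {g : β → ℝ} {t : ℝ}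
    (hf : HasSum f t) (hg : HasSum g t) (hle : ∀ b, ∑' c, f (b, c) ≤ g b) (b : β) :
    HasSum (fun c => f (b, c)) (g b) := by
  have hfib : ∀ b, HasSum (fun c => f (b, c)) (∑' c, f (b, c)) :=
    fun b => (hf.summable.prod_factor b).hasSum
  refine (hle b).eq_or_lt.elim (fun h => h ▸ hfib b) fun hlt => ?_
  exact absurd (hasSum_lt hle hlt (hf.prod_fiberwise hfib) hg) (lt_irrefl t)

section FirstIndexAbove

open Classical in
/-- The least `a` with `x < c a`, and `0` if there is none. -/
noncomputable def firstIndexAbove (c : ℕ → ℝ) (x : ℝ) : ℕ :=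
  Nat.find (p := fun a => x < c a ∨ ∀ b, c b ≤ x) <| by
    by_cases h : ∃ a, x < c a
    · exact h.imp fun _ => Or.inl
    · exact ⟨0, Or.inr fun b => not_lt.1 fun hb => h ⟨b, hb⟩⟩

lemma measurable_firstIndexAbove (c : ℕ → ℝ) : Measurable (firstIndexAbove c) := by
  classical
  refine measurable_find _ fun a => ?_
  simp only [ofPred_or, ofPred_forall]
  exact measurableSet_Iio.union (.iInter fun _ => measurableSet_Ici)

lemma firstIndexAbove_eq {c : ℕ → ℝ} {x : ℝ} {a : ℕ} (ha : x < c a) (hlt : ∀ b < a, c b ≤ x) :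
    firstIndexAbove c x = a := by
  classical
  rw [firstIndexAbove, Nat.find_eq_iff]
  exact ⟨Or.inl ha, fun b hb h => h.elim (hlt b hb).not_gt fun hall => (hall a).not_gt ha⟩

lemma lt_firstIndexAbove {c : ℕ → ℝ} {x : ℝ} (h : ∃ a, x < c a) :
    x < c (firstIndexAbove c x) ∧ ∀ b < firstIndexAbove c x, c b ≤ x := by
  classical
  obtain ⟨a, ha⟩ := h
  refine ⟨(Nat.find_spec (p := fun a => x < c a ∨ ∀ b, c b ≤ x) _).resolve_right
    fun hall => (hall a).not_gt ha, fun b hb => ?_⟩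
  exact not_lt.1 fun h => Nat.find_min (p := fun a => x < c a ∨ ∀ b, c b ≤ x) _ hb (Or.inl h)

end FirstIndexAbove

section IntervalCoding

structure IsConsistentWordWeights (d : ∀ k, (Fin k → ℕ) → ℝ) : Prop where
  nonneg : ∀ k w, 0 ≤ d k w
  empty : ∀ w : Fin 0 → ℕ, d 0 w = 1
  hasSum_snoc : ∀ k (w : Fin k → ℕ), HasSum (fun a => d (k + 1) (Fin.snoc w a)) (d k w)

variable (d : ∀ k, (Fin k → ℕ) → ℝ)

noncomputable def leftEnd : ∀ k, (Fin k → ℕ) → ℝ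
  | 0, _ => 0
  | k + 1, w => leftEnd k (Fin.init w) +
      ∑ b ∈ Finset.range (w (Fin.last k)), d (k + 1) (Fin.snoc (Fin.init w) b)

/-- `cutPoint d w a` is the left end of the interval of `Fin.snoc w a`: the intervals of the
one-letter extensions of `w` are laid out side by side, in the order of the letter. -/
noncomputable def cutPoint {k : ℕ} (w : Fin k → ℕ) (a : ℕ) : ℝ :=
  leftEnd d k w + ∑ b ∈ Finset.range a, d (k + 1) (Fin.snoc w b)

def wordInterval {k : ℕ} (w : Fin k → ℕ) : Set ℝ := Ico (leftEnd d k w) (leftEnd d k w + d k w)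

lemma wordInterval_snoc {k : ℕ} (w : Fin k → ℕ) (a : ℕ) :
    wordInterval d (Fin.snoc w a) = Ico (cutPoint d w a) (cutPoint d w (a + 1)) := by
  simp [wordInterval, leftEnd, cutPoint, Finset.sum_range_succ, add_assoc]

/-- The letter `a` with `x ∈ wordInterval d (Fin.snoc w a)`, when there is one. -/
noncomputable def nextLetter {k : ℕ} (w : Fin k → ℕ) : ℝ → ℕ :=
  firstIndexAbove fun a => cutPoint d w (a + 1)

noncomputable def codingPrefix (x : ℝ) : ∀ k, Fin k → ℕ
  | 0 => Fin.elim0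
  | k + 1 => Fin.snoc (codingPrefix x k) (nextLetter d (codingPrefix x k) x)

noncomputable def coding (x : ℝ) (n : ℕ) : ℕ := codingPrefix d x (n + 1) (Fin.last n)

lemma codingPrefix_apply (x : ℝ) : ∀ (k : ℕ) (i : Fin k), codingPrefix d x k i = coding d x i
  | k + 1, i => by
    induction i using Fin.lastCases with
    | last => rfl
    | cast j =>
      rw [codingPrefix, Fin.snoc_castSucc, Fin.val_castSucc, codingPrefix_apply x k j]

lemma coding_mem_wordCylinder_iff {x : ℝ} {k : ℕ} {w : Fin k → ℕ} :
    coding d x ∈ wordCylinder w ↔ codingPrefix d x k = w := by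
  simp only [wordCylinder, mem_ofPred_eq, funext_iff, codingPrefix_apply]

lemma measurable_codingPrefix : ∀ k, Measurable fun x => codingPrefix d x k
  | 0 => measurable_const
  | k + 1 => by
    have hstep : Measurable fun p : (Fin k → ℕ) × ℝ =>
        (Fin.snoc p.1 (nextLetter d p.1 p.2) : Fin (k + 1) → ℕ) :=
      measurable_from_prod_countable_right fun w =>
        show Measurable ((fun a => (Fin.snoc w a : Fin (k + 1) → ℕ)) ∘ nextLetter d w) from
          measurable_from_nat.comp (measurable_firstIndexAbove _)
    exact hstep.comp ((measurable_codingPrefix k).prodMk measurable_id)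

lemma measurable_coding : Measurable (coding d) :=
  measurable_pi_lambda _ fun n => (measurable_pi_apply _).comp (measurable_codingPrefix d (n + 1))

variable {d}

lemma monotone_cutPoint (hnn : ∀ k w, 0 ≤ d k w) {k : ℕ} (w : Fin k → ℕ) :
    Monotone (cutPoint d w) := fun a b hab => by
  unfold cutPoint
  gcongr
  exact fun _ _ _ => hnn _ _

lemma nextLetter_eq (hnn : ∀ k w, 0 ≤ d k w) {k : ℕ} {w : Fin k → ℕ} {a : ℕ} {x : ℝ}
    (hx : x ∈ wordInterval d (Fin.snoc w a)) : nextLetter d w x = a := by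
  rw [wordInterval_snoc] at hx
  exact firstIndexAbove_eq hx.2 fun b hb => (monotone_cutPoint hnn w hb).trans hx.1

lemma wordInterval_snoc_subset (hnn : ∀ k w, 0 ≤ d k w) {k : ℕ} {w : Fin k → ℕ}
    (hw : HasSum (fun a => d (k + 1) (Fin.snoc w a)) (d k w)) (a : ℕ) :
    wordInterval d (Fin.snoc w a) ⊆ wordInterval d w := by
  rw [wordInterval_snoc]
  refine Ico_subset_Ico ?_ (add_le_add_right (sum_le_hasSum _ (fun _ _ => hnn _ _) hw) _)
  exact le_add_of_nonneg_right (Finset.sum_nonneg fun _ _ => hnn _ _)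

lemma mem_wordInterval_snoc_nextLetter {k : ℕ} {w : Fin k → ℕ}
    (hw : HasSum (fun a => d (k + 1) (Fin.snoc w a)) (d k w)) {x : ℝ}
    (hx : x ∈ wordInterval d w) : x ∈ wordInterval d (Fin.snoc w (nextLetter d w x)) := by
  have hex : ∃ a, x < cutPoint d w (a + 1) := by
    have hlim := (hw.tendsto_sum_nat.const_add (leftEnd d k w)).comp (tendsto_add_atTop_nat 1)
    exact (hlim.eventually (eventually_gt_nhds hx.2)).exists
  obtain ⟨hlt, hmin⟩ := lt_firstIndexAbove hex
  rw [wordInterval_snoc]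
  refine ⟨?_, hlt⟩
  rcases Nat.eq_zero_or_eq_succ_pred (nextLetter d w x) with h0 | hsucc
  · rw [h0]; simpa [cutPoint] using hx.1
  · rw [hsucc]; exact hmin _ (by rw [nextLetter] at hsucc ⊢; omega)

lemma codingPrefix_eq_of_mem (hd : IsConsistentWordWeights d) {x : ℝ} :
    ∀ {k : ℕ} {w : Fin k → ℕ}, x ∈ wordInterval d w → codingPrefix d x k = w
  | 0, w, _ => Subsingleton.elim _ _
  | k + 1, w, hx => by
    rw [← Fin.snoc_init_self w] at hx ⊢
    rw [codingPrefix, codingPrefix_eq_of_mem hd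
        (wordInterval_snoc_subset hd.nonneg (hd.hasSum_snoc _ _) _ hx), nextLetter_eq hd.nonneg hx]

lemma wordInterval_subset_Ico (hd : IsConsistentWordWeights d) :
    ∀ {k : ℕ} (w : Fin k → ℕ), wordInterval d w ⊆ Ico 0 1
  | 0, w => by simp [wordInterval, leftEnd, hd.empty]
  | k + 1, w => by
    rw [← Fin.snoc_init_self w]
    exact (wordInterval_snoc_subset hd.nonneg (hd.hasSum_snoc _ _) _).trans
      (wordInterval_subset_Ico hd _)

lemma mem_wordInterval_codingPrefix (hd : IsConsistentWordWeights d) {x : ℝ}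
    (hx : x ∈ Ico (0 : ℝ) 1) : ∀ k, x ∈ wordInterval d (codingPrefix d x k)
  | 0 => by simpa [wordInterval, leftEnd, hd.empty] using hx
  | k + 1 =>
    mem_wordInterval_snoc_nextLetter (hd.hasSum_snoc _ _) (mem_wordInterval_codingPrefix hd hx k)

lemma coding_preimage_wordCylinder_inter_Ico (hd : IsConsistentWordWeights d) {k : ℕ}
    (w : Fin k → ℕ) : coding d ⁻¹' wordCylinder w ∩ Ico 0 1 = wordInterval d w := by
  ext x
  simp only [mem_inter_iff, mem_preimage, coding_mem_wordCylinder_iff]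
  exact ⟨fun ⟨hw, hx⟩ => hw ▸ mem_wordInterval_codingPrefix hd hx k,
    fun hx => ⟨codingPrefix_eq_of_mem hd hx, wordInterval_subset_Ico hd w hx⟩⟩

theorem IsConsistentWordWeights.exists_isProbabilityMeasure (hd : IsConsistentWordWeights d) :
    ∃ μ : Measure (ℕ → ℕ), IsProbabilityMeasure μ ∧
      ∀ k (w : Fin k → ℕ), μ (wordCylinder w) = ENNReal.ofReal (d k w) := by
  have hmeas := measurable_coding d
  refine ⟨(volume.restrict (Ico 0 1)).map (coding d), ⟨?_⟩, fun k w => ?_⟩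
  · simp [Measure.map_apply hmeas MeasurableSet.univ]
  · rw [Measure.map_apply hmeas (measurableSet_wordCylinder w),
      Measure.restrict_apply (hmeas (measurableSet_wordCylinder w)),
      coding_preimage_wordCylinder_inter_Ico hd, wordInterval, Real.volume_Ico,
      add_sub_cancel_left]

end IntervalCoding

section EmpiricalMeasure

variable {X : Type*} [MeasurableSpace X]

noncomputable def empiricalMeasure (T : X → X) (x : X) (N : ℕ) : Measure X :=
  (N : ℝ≥0∞)⁻¹ • ∑ n ∈ Finset.range N, Measure.dirac (T^[n] x)

open Classical in
lemma empiricalMeasure_apply (T : X → X) (x : X) (N : ℕ) {s : Set X} (hs : MeasurableSet s) :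
    empiricalMeasure T x N s = ((Finset.range N).filter fun n => T^[n] x ∈ s).card / N := by
  simp [empiricalMeasure, Measure.dirac_apply' _ hs, indicator_apply, Finset.sum_boole,
    ENNReal.div_eq_inv_mul]

lemma empiricalMeasure_eq_zero (T : X → X) (x : X) (N : ℕ) {s : Set X} (hs : MeasurableSet s)
    (h : ∀ n, T^[n] x ∉ s) : empiricalMeasure T x N s = 0 := by
  classical
  simp [empiricalMeasure_apply T x N hs, h]

lemma isProbabilityMeasure_empiricalMeasure (T : X → X) (x : X) {N : ℕ} (hN : N ≠ 0) :
    IsProbabilityMeasure (empiricalMeasure T x N) :=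
  ⟨by simp [empiricalMeasure_apply T x N .univ, ENNReal.div_self (Nat.cast_ne_zero.2 hN)]⟩

lemma integral_empiricalMeasure [MeasurableSingletonClass X] (T : X → X) (x : X) (N : ℕ)
    (g : X → ℝ) : ∫ y, g y ∂empiricalMeasure T x N = birkhoffAverage ℝ T g N x := by
  rw [empiricalMeasure, integral_smul_measure, integral_finsetSum_measure, birkhoffAverage,
    birkhoffSum]
  · simp [integral_dirac]
  · exact fun n _ => integrable_dirac enorm_lt_top

end EmpiricalMeasure

lemma tendsto_birkhoffAverage_apply_iff {X : Type*} {T : X → X} {g : X → ℝ}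
    (hg : Bornology.IsBounded (range g)) {x : X} {l : ℝ} :
    Tendsto (fun N => birkhoffAverage ℝ T g N (T x)) atTop (𝓝 l) ↔
      Tendsto (fun N => birkhoffAverage ℝ T g N x) atTop (𝓝 l) := by
  have hdiff := tendsto_birkhoffAverage_apply_sub_birkhoffAverage' ℝ hg T x
  exact ⟨fun h => by simpa using h.sub hdiff, fun h => by simpa using h.add hdiff⟩

section GenericPoint

variable {X : Type*} [TopologicalSpace X] [MeasurableSpace X]

lemma tendsto_birkhoffAverage_of_forall_isOpen_le_liminf [OpensMeasurableSpace X]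
    [MeasurableSingletonClass X] {T : X → X} {x : X} {μ : Measure X} [IsProbabilityMeasure μ]
    (h : ∀ G, IsOpen G → μ G ≤ liminf (fun N => empiricalMeasure T x N G) atTop)
    (g : X →ᵇ ℝ) : Tendsto (fun N => birkhoffAverage ℝ T g N x) atTop (𝓝 (∫ y, g y ∂μ)) := by
  let ν : ℕ → ProbabilityMeasure X := fun N =>
    ⟨empiricalMeasure T x (N + 1), isProbabilityMeasure_empiricalMeasure T x N.succ_ne_zero⟩
  have hν : Tendsto ν atTop (𝓝 ⟨μ, ‹_›⟩) := tendsto_of_forall_isOpen_le_liminf_nat' fun G hG =>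
    (h G hG).trans_eq (liminf_nat_add (fun N => empiricalMeasure T x N G) 1).symm
  have : Tendsto (fun N => ∫ y, g y ∂empiricalMeasure T x (N + 1)) atTop (𝓝 (∫ y, g y ∂μ)) :=
    ProbabilityMeasure.tendsto_iff_forall_integral_tendsto.1 hν g
  simp only [integral_empiricalMeasure] at this
  exact (tendsto_add_atTop_iff_nat 1).1 this

lemma map_eq_of_tendsto_birkhoffAverage [BorelSpace X] [HasOuterApproxClosed X] {T : X → X}
    (hT : Continuous T) {μ : Measure X} [IsFiniteMeasure μ] {x : X}
    (h : ∀ g : X →ᵇ ℝ, Tendsto (fun N => birkhoffAverage ℝ T g N x) atTop (𝓝 (∫ y, g y ∂μ))) :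
    μ.map T = μ := by
  refine ext_of_forall_integral_eq_of_IsFiniteMeasure fun g => ?_
  rw [integral_map hT.aemeasurable g.continuous.aestronglyMeasurable]
  have hcomp : ∀ N, birkhoffAverage ℝ T (g ∘ T) N x = birkhoffAverage ℝ T g N (T x) := fun N => by
    simp only [birkhoffAverage, birkhoffSum, comp_apply, ← iterate_succ_apply' T,
      iterate_succ_apply]
  have hgT : Tendsto (fun N => birkhoffAverage ℝ T g N (T x)) atTop (𝓝 (∫ y, g (T y) ∂μ)) := by
    have := h (g.compContinuous ⟨T, hT⟩)
    rw [BoundedContinuousFunction.coe_compContinuous, ContinuousMap.coe_mk] at this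
    simpa only [hcomp, comp_apply] using this
  exact tendsto_nhds_unique hgT ((tendsto_birkhoffAverage_apply_iff g.isBounded_range).2 (h g))

lemma measure_closure_orbit_eq_one [OpensMeasurableSpace X] {T : X → X} {x : X}
    {μ : Measure X} [IsProbabilityMeasure μ]
    (h : ∀ G, IsOpen G → μ G ≤ liminf (fun N => empiricalMeasure T x N G) atTop) :
    μ (closure {y | ∃ n, y = T^[n] x}) = 1 := by
  rw [← prob_compl_eq_zero_iff isClosed_closure.measurableSet, ← nonpos_iff_eq_zero]
  refine (h _ isClosed_closure.isOpen_compl).trans_eq ?_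
  have hzero : ∀ N, empiricalMeasure T x N (closure {y | ∃ n, y = T^[n] x})ᶜ = 0 := fun N =>
    empiricalMeasure_eq_zero T x N isClosed_closure.isOpen_compl.measurableSet
      fun n hn => hn (subset_closure ⟨n, rfl⟩)
  simp [hzero]

end GenericPoint

section Shift

variable {α : Type*}

def shift (s : ℕ → α) : ℕ → α := fun n => s (n + 1)

lemma shift_iterate_apply (n : ℕ) (s : ℕ → α) (i : ℕ) : shift^[n] s i = s (n + i) := by
  induction n generalizing s with
  | zero => simp
  | succ n ih => rw [iterate_succ_apply, ih, shift, add_right_comm, add_assoc]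

lemma continuous_shift [TopologicalSpace α] : Continuous (shift : (ℕ → α) → ℕ → α) :=
  continuous_pi fun n => continuous_apply (n + 1)

lemma shift_iterate_mem_wordCylinder_iff {n k : ℕ} {s : ℕ → α} {w : Fin k → α} :
    shift^[n] s ∈ wordCylinder w ↔ ∀ i : Fin k, s (n + i) = w i := by
  simp only [wordCylinder, mem_ofPred_eq, shift_iterate_apply]

end Shift

section WordDensities

variable {Q : ℕ → ℕ} {dens : ∀ k, (Fin k → ℕ) → ℝ}

open Classical in
/-- The occurrences counted in `HasWordDensities` start at `1`: they are those of the orbit of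
`shift Q`. -/
lemma ncard_occurrences_eq {k : ℕ} (w : Fin k → ℕ) (N : ℕ) :
    {n : ℕ | 1 ≤ n ∧ n ≤ N ∧ ∀ i : Fin k, Q (n + (i : ℕ)) = w i}.ncard =
      ((Finset.range N).filter fun n => shift^[n] (shift Q) ∈ wordCylinder w).card := by
  rw [← Set.ncard_coe_finset, eq_comm, ← Set.ncard_image_of_injective _ (add_left_injective 1)]
  congr 1
  ext n
  simp only [Finset.coe_filter, Finset.mem_range, ← iterate_succ_apply,
    shift_iterate_mem_wordCylinder_iff, mem_image, mem_ofPred_eq]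
  constructor
  · rintro ⟨m, ⟨hm, h⟩, rfl⟩
    exact ⟨by omega, by omega, h⟩
  · rintro ⟨h1, h2, h⟩
    exact ⟨n - 1, ⟨by omega, by rwa [show (n - 1).succ = n by omega]⟩, by omega⟩

def HasWordDensities (Q : ℕ → ℕ) (dens : ∀ k, (Fin k → ℕ) → ℝ) : Prop :=
  ∀ (k : ℕ) (w : Fin k → ℕ), Tendsto (fun N : ℕ =>
    ({n : ℕ | 1 ≤ n ∧ n ≤ N ∧ ∀ i : Fin k, Q (n + (i : ℕ)) = w i}.ncard : ℝ) / N)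
    atTop (𝓝 (dens k w))

namespace HasWordDensities

lemma nonneg (hdens : HasWordDensities Q dens) (k : ℕ) (w : Fin k → ℕ) : 0 ≤ dens k w :=
  ge_of_tendsto' (hdens k w) fun _ => by positivity

lemma tendsto_empiricalMeasure_wordCylinder (hdens : HasWordDensities Q dens) (k : ℕ)
    (w : Fin k → ℕ) : Tendsto (fun N => empiricalMeasure shift (shift Q) N (wordCylinder w))
      atTop (𝓝 (ENNReal.ofReal (dens k w))) := by
  classical
  refine (ENNReal.tendsto_ofReal (hdens k w)).congr' ?_
  filter_upwards [eventually_ne_atTop 0] with N hN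
  rw [empiricalMeasure_apply _ _ _ (measurableSet_wordCylinder w), ← ncard_occurrences_eq,
    ENNReal.ofReal_div_of_pos (by positivity), ENNReal.ofReal_natCast, ENNReal.ofReal_natCast]

lemma hasSum_snoc (hdens : HasWordDensities Q dens)
    (hone : ∀ k : ℕ, ∑' w : Fin k → ℕ, dens k w = 1) (k : ℕ) (w : Fin k → ℕ) :
    HasSum (fun a => dens (k + 1) (Fin.snoc w a)) (dens k w) := by
  have hsum : ∀ k, HasSum (dens k) 1 := fun k => by
    by_cases h : Summable (dens k)
    · exact hone k ▸ h.hasSum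
    · simpa [tsum_eq_zero_of_not_summable h] using hone k
  let e := (Equiv.prodComm _ _).trans (Fin.snocEquiv fun _ : Fin (k + 1) => ℕ)
  have hf : HasSum (fun p : (Fin k → ℕ) × ℕ => dens (k + 1) (Fin.snoc p.1 p.2)) 1 :=
    (e.hasSum_iff (f := dens (k + 1))).2 (hsum (k + 1))
  refine hf.hasSum_fiber_of_tsum_le (hsum k) (fun v => ?_) w
  have hle := tsum_le_liminf_measure_iUnion (pairwise_disjoint_wordCylinder_snoc v)
    (fun a => measurableSet_wordCylinder _)
    (fun a => hdens.tendsto_empiricalMeasure_wordCylinder (k + 1) (Fin.snoc v a))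
  rwa [iUnion_wordCylinder_snoc, (hdens.tendsto_empiricalMeasure_wordCylinder k v).liminf_eq,
    ← ENNReal.ofReal_tsum_of_nonneg (fun a => hdens.nonneg _ _) (hf.summable.prod_factor v),
    ENNReal.ofReal_le_ofReal_iff (hdens.nonneg k v)] at hle

lemma isConsistentWordWeights (hdens : HasWordDensities Q dens)
    (hone : ∀ k : ℕ, ∑' w : Fin k → ℕ, dens k w = 1) : IsConsistentWordWeights dens where
  nonneg := hdens.nonneg
  empty w := by
    have h := hone 0
    rw [tsum_fintype, Fintype.sum_unique] at h
    convert h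
  hasSum_snoc := hdens.hasSum_snoc hone

end HasWordDensities

lemma measure_pos_of_inter_closure_orbit (hnn : ∀ k w, 0 ≤ dens k w) {μ : Measure (ℕ → ℕ)}
    (hμ : ∀ k (w : Fin k → ℕ), μ (wordCylinder w) = ENNReal.ofReal (dens k w))
    (hzero : ∀ (k : ℕ) (w : Fin k → ℕ), dens k w = 0 →
      ∀ n : ℕ, ¬ ∀ i : Fin k, Q (n + (i : ℕ)) = w i)
    {U : Set (ℕ → ℕ)} (hU : IsOpen U)
    (hne : (U ∩ closure {s | ∃ n : ℕ, s = shift^[n] Q}).Nonempty) : 0 < μ U := by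
  obtain ⟨s, hsU, hs⟩ := hne
  obtain ⟨k, hsub⟩ := hU.exists_wordCylinder_subset hsU
  obtain ⟨_, hocc, n, rfl⟩ := mem_closure_iff.1 hs _ (isOpen_wordCylinder _)
    (mem_wordCylinder_prefix s k)
  have hpos : 0 < dens k fun i => s i := (hnn k _).lt_of_ne' fun h =>
    hzero k _ h n (shift_iterate_mem_wordCylinder_iff.1 hocc)
  exact (hμ k _ ▸ ENNReal.ofReal_pos.2 hpos).trans_le (measure_mono hsub)

end WordDensities

theorem stmt_4_general
    (Q : ℕ → ℕ)
    (T : (ℕ → ℕ) → (ℕ → ℕ)) (hT : ∀ s n, T s n = s (n + 1))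
    (dens : ∀ k : ℕ, (Fin k → ℕ) → ℝ)
    (hdens : ∀ (k : ℕ) (w : Fin k → ℕ),
      Tendsto (fun N : ℕ =>
        ({n : ℕ | 1 ≤ n ∧ n ≤ N ∧ ∀ i : Fin k, Q (n + (i : ℕ)) = w i}.ncard : ℝ) / N)
        atTop (𝓝 (dens k w)))
    (hzero : ∀ (k : ℕ) (w : Fin k → ℕ), dens k w = 0 →
      ∀ n : ℕ, ¬ ∀ i : Fin k, Q (n + (i : ℕ)) = w i)
    (hone : ∀ k : ℕ, ∑' w : Fin k → ℕ, dens k w = 1) :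
    ∃ μ : Measure (ℕ → ℕ), IsProbabilityMeasure μ ∧
      μ.map T = μ ∧
      (∀ g : BoundedContinuousFunction (ℕ → ℕ) ℝ,
        Tendsto (fun N : ℕ => (1 / (N : ℝ)) * ∑ n ∈ Finset.range N, g (T^[n] Q))
          atTop (𝓝 (∫ s, g s ∂μ))) ∧
      μ (closure {s | ∃ n : ℕ, s = T^[n] Q}) = 1 ∧
      (∀ U : Set (ℕ → ℕ), IsOpen U →
        (U ∩ closure {s | ∃ n : ℕ, s = T^[n] Q}).Nonempty → 0 < μ U) := by
  obtain rfl : T = shift := funext fun s => funext (hT s)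
  replace hdens : HasWordDensities Q dens := hdens
  obtain ⟨μ, hμ, hcyl⟩ := (hdens.isConsistentWordWeights hone).exists_isProbabilityMeasure
  have hopen (G : Set (ℕ → ℕ)) (hG : IsOpen G) :
      μ G ≤ liminf (fun N => empiricalMeasure shift (shift Q) N G) atTop :=
    measure_le_liminf_of_tendsto_wordCylinder
      (fun k w => hcyl k w ▸ hdens.tendsto_empiricalMeasure_wordCylinder k w) hG
  have hgeneric (g : (ℕ → ℕ) →ᵇ ℝ) :
      Tendsto (fun N => birkhoffAverage ℝ shift g N Q) atTop (𝓝 (∫ s, g s ∂μ)) :=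
    (tendsto_birkhoffAverage_apply_iff g.isBounded_range).1
      (tendsto_birkhoffAverage_of_forall_isOpen_le_liminf hopen g)
  refine ⟨μ, hμ, map_eq_of_tendsto_birkhoffAverage continuous_shift hgeneric, fun g => ?_, ?_,
    fun U hU hne => measure_pos_of_inter_closure_orbit hdens.nonneg hcyl hzero hU hne⟩
  · simpa [birkhoffAverage, birkhoffSum, one_div] using hgeneric g
  · refine le_antisymm prob_le_one ((measure_closure_orbit_eq_one hopen).symm.trans_le ?_)
    refine measure_mono (closure_mono ?_)
    rintro _ ⟨n, rfl⟩
    exact ⟨n + 1, (iterate_succ_apply _ _ _).symm⟩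

/-- Characterization of dynamically generated basic sequences: if all word densities of
`Q` exist, words of density zero never occur, and densities of words of each length sum
to one, then the empirical measures along the shift orbit of `Q` converge weak* to a
shift-invariant Borel probability measure `μ` for which `Q` is a generic point, `μ` is
supported on the orbit closure, and `μ` is positive on open sets meeting the orbit
closure. -/
theorem stmt_4
    (Q : ℕ → ℕ) (hQ : ∀ n, 2 ≤ Q n)
    (T : (ℕ → ℕ) → (ℕ → ℕ)) (hT : ∀ s n, T s n = s (n + 1))
    (dens : ∀ k : ℕ, (Fin k → ℕ) → ℝ)
    (hdens : ∀ (k : ℕ) (w : Fin k → ℕ),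
      Tendsto (fun N : ℕ =>
        ({n : ℕ | 1 ≤ n ∧ n ≤ N ∧ ∀ i : Fin k, Q (n + (i : ℕ)) = w i}.ncard : ℝ) / N)
        atTop (𝓝 (dens k w)))
    (hzero : ∀ (k : ℕ) (w : Fin k → ℕ), dens k w = 0 →
      ∀ n : ℕ, ¬ ∀ i : Fin k, Q (n + (i : ℕ)) = w i)
    (hone : ∀ k : ℕ, ∑' w : Fin k → ℕ, dens k w = 1) :
    ∃ μ : Measure (ℕ → ℕ), IsProbabilityMeasure μ ∧
      μ.map T = μ ∧
      (∀ g : BoundedContinuousFunction (ℕ → ℕ) ℝ,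
        Tendsto (fun N : ℕ => (1 / (N : ℝ)) * ∑ n ∈ Finset.range N, g (T^[n] Q))
          atTop (𝓝 (∫ s, g s ∂μ))) ∧
      μ (closure {s | ∃ n : ℕ, s = T^[n] Q}) = 1 ∧
      (∀ U : Set (ℕ → ℕ), IsOpen U →
        (U ∩ closure {s | ∃ n : ℕ, s = T^[n] Q}).Nonempty → 0 < μ U) :=
  stmt_4_general Q T hT dens hdens hzero hone
end

section
/- Let Q be a basic sequence generated by a continuous measure preserving system (X, 𝓑, μ, T) with continuous f : X → ℕ_{≥2} and generic point x₀ (so q_n = f(Tⁿx₀)). Then for every block of digits D = (d_1,...,d_ℓ) ∈ ℕ₀^ℓ, the limit P_D := lim_{n→∞} Q_n(D)/n exists and equals ∫_X f_D dμ, where f_D(x) = (∏_{i=1}^ℓ f(Tⁱx))^{−1} if f(Tⁱx) > d_i for all 1 ≤ i ≤ ℓ, and f_D(x) = 0 otherwise. -/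
/-!
The `j`-th summand of `Q_n(D)` is `f_D (T^{j-1} x₀)`, so `Q_n(D)/n` is the Birkhoff average of
`f_D` along the orbit of `x₀`. Since `f_D` factors through the discrete space `ℕ^ℓ` it is
continuous, and it takes values in `[0, 1]`, so it is integrable and genericity of `x₀` gives the
limit.
-/

open Filter MeasureTheory Topology Finset

section BlockWeight

variable {ι : Type*} [Fintype ι]

/-- `blockWeight D (q_j, …, q_{j+ℓ-1})` is the summand `𝓘_{Q,j}(D) / (q_j ⋯ q_{j+ℓ-1})` of
`Q_n(D)`, and `blockWeight D (f (T x), …, f (Tˡ x))` is `f_D x`. -/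
noncomputable def blockWeight (D v : ι → ℕ) : ℝ :=
  if ∀ i, D i < v i then (∏ i, (v i : ℝ))⁻¹ else 0

lemma blockWeight_nonneg (D v : ι → ℕ) : 0 ≤ blockWeight D v := by
  unfold blockWeight
  split_ifs <;> positivity

lemma blockWeight_le_one (D v : ι → ℕ) : blockWeight D v ≤ 1 := by
  unfold blockWeight
  split_ifs with h
  · exact inv_le_one_of_one_le₀ <| Finset.one_le_prod fun i _ =>
      Nat.one_le_cast.mpr (Nat.one_le_of_lt (h i))
  · exact zero_le_one

lemma continuous_blockWeight {X : Type*} [TopologicalSpace X] (D : ι → ℕ) {v : X → ι → ℕ}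
    (hv : Continuous v) : Continuous fun x => blockWeight D (v x) :=
  (continuous_of_discreteTopology (f := blockWeight D)).comp hv

lemma integrable_blockWeight {X : Type*} [TopologicalSpace X] [MeasurableSpace X]
    [OpensMeasurableSpace X] (μ : Measure X) [IsFiniteMeasure μ] (D : ι → ℕ) {v : X → ι → ℕ}
    (hv : Continuous v) : Integrable (fun x => blockWeight D (v x)) μ :=
  .of_bound (continuous_blockWeight D hv).aestronglyMeasurable 1 <| ae_of_all _ fun x => by
    rw [Real.norm_of_nonneg (blockWeight_nonneg D _)]
    exact blockWeight_le_one D _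

end BlockWeight

lemma sum_Icc_one_eq_sum_range {M : Type*} [AddCommMonoid M] (F : ℕ → M) (n : ℕ) :
    ∑ j ∈ Icc 1 n, F j = ∑ k ∈ range n, F (k + 1) := by
  rw [← Finset.Ico_add_one_right_eq_Icc, Finset.sum_Ico_eq_sum_range]
  simp only [add_tsub_cancel_right, add_comm 1]

theorem stmt_5_general {X : Type*} [MetricSpace X]
    [MeasurableSpace X] [BorelSpace X]
    (μ : Measure X) [IsProbabilityMeasure μ]
    (T : X → X) (hTcont : Continuous T)
    (f : X → ℕ) (hfcont : Continuous f)
    (x₀ : X)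
    (hgen : ∀ g : X → ℝ, Continuous g → Integrable g μ →
      Tendsto (fun N : ℕ => (1 / (N : ℝ)) * ∑ n ∈ Finset.range N, g (T^[n] x₀))
        atTop (𝓝 (∫ x, g x ∂μ)))
    (q : ℕ → ℕ) (hq : ∀ n, q n = f (T^[n] x₀))
    (ℓ : ℕ) (D : Fin ℓ → ℕ) :
    Tendsto (fun n : ℕ =>
        (∑ j ∈ Finset.Icc 1 n,
          (if ∀ i : Fin ℓ, D i < q (j + (i : ℕ)) then
            (∏ i : Fin ℓ, (q (j + (i : ℕ)) : ℝ))⁻¹ else 0)) / (n : ℝ))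
      atTop
      (𝓝 (∫ x, (if ∀ i : Fin ℓ, D i < f (T^[(i : ℕ) + 1] x) then
            (∏ i : Fin ℓ, (f (T^[(i : ℕ) + 1] x) : ℝ))⁻¹ else 0) ∂μ)) := by
  have hv : Continuous fun x (i : Fin ℓ) => f (T^[(i : ℕ) + 1] x) :=
    continuous_pi fun i => hfcont.comp (hTcont.iterate _)
  convert hgen _ (continuous_blockWeight D hv) (integrable_blockWeight μ D hv) using 2 with n
  · have horbit : ∀ (k : ℕ) (i : Fin ℓ), f (T^[(i : ℕ) + 1] (T^[k] x₀)) = q (k + 1 + i) := by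
      intro k i
      rw [hq, ← Function.iterate_add_apply]
      congr 2
      omega
    simp only [blockWeight, horbit, sum_Icc_one_eq_sum_range, one_div_mul_eq_div]
  -- not `rfl`: the statement decides `∀ i : Fin ℓ, _` by `Nat.decidableForallFin`
  · simp only [blockWeight]

/-- For a basic sequence `Q` generated by a continuous measure preserving system
`(X, μ, T)` with continuous `f : X → ℕ≥2` and generic point `x₀` (so `q n = f (Tⁿ x₀)`),
and every block of digits `D`, the limit `P_D = lim Q_n(D)/n` exists and equals
`∫ f_D dμ`, where `f_D x = (∏ f(Tⁱx))⁻¹` if `f(Tⁱx) > d_i` for `1 ≤ i ≤ ℓ` and `0`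
otherwise. -/
theorem stmt_5 {X : Type*} [MetricSpace X] [CompleteSpace X]
    [TopologicalSpace.SeparableSpace X] [MeasurableSpace X] [BorelSpace X]
    (μ : Measure X) [IsProbabilityMeasure μ]
    (hμpos : ∀ U : Set X, IsOpen U → U.Nonempty → 0 < μ U)
    (T : X → X) (hTcont : Continuous T) (hTpres : MeasurePreserving T μ μ)
    (f : X → ℕ) (hfcont : Continuous f) (hf2 : ∀ x, 2 ≤ f x)
    (x₀ : X)
    (hgen : ∀ g : X → ℝ, Continuous g → Integrable g μ →
      Tendsto (fun N : ℕ => (1 / (N : ℝ)) * ∑ n ∈ Finset.range N, g (T^[n] x₀))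
        atTop (𝓝 (∫ x, g x ∂μ)))
    (q : ℕ → ℕ) (hq : ∀ n, q n = f (T^[n] x₀))
    (ℓ : ℕ) (hℓ : 0 < ℓ) (D : Fin ℓ → ℕ) :
    Tendsto (fun n : ℕ =>
        (∑ j ∈ Finset.Icc 1 n,
          (if ∀ i : Fin ℓ, D i < q (j + (i : ℕ)) then
            (∏ i : Fin ℓ, (q (j + (i : ℕ)) : ℝ))⁻¹ else 0)) / (n : ℝ))
      atTop
      (𝓝 (∫ x, (if ∀ i : Fin ℓ, D i < f (T^[(i : ℕ) + 1] x) then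
            (∏ i : Fin ℓ, (f (T^[(i : ℕ) + 1] x) : ℝ))⁻¹ else 0) ∂μ)) :=
  stmt_5_general μ T hTcont f hfcont x₀ hgen q hq ℓ D
end

section
/- Let g ≥ 2, I ∈ ℕ, and let (c_n)_{n≥1} be a sequence of positive integers (c_n = log_g q_n for a g-power basic sequence) generated as c_n = h(Tⁿx) where x is a generic point of a measure-preserving system and h is integrable with ∫ h dμ = I < ∞. Define a_0 = 0 and a_n = a_{n−1} + c_n, and for k ≥ 0 let A_k = A ∪ (A+1) ∪ ⋯ ∪ (A+k) where A = {a_n : n ≥ 0}. Then the natural density of A_k exists and equals (1/I)∫ min(k+1, h) dμ = 1 − (1/I)∫_{h > k+1} (h − k − 1) dμ. -/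
/-!
Between consecutive partial sums, `a M < m ≤ a (M + 1)`, the members of `A_k` are those of the
`k` integers following `a M` that precede `a (M + 1)`, and `a (M + 1)` itself:
`min (k + 1) (c (M + 1))` of them; hence `#(A_k ∩ [1, a M]) = ∑_{n ≤ M} min (k + 1) (c n)`. Since `min (k + 1) ·` is a
constant plus a finite combination of indicators of single values, the frequency hypothesis gives
`∑_{n ≤ M} min (k + 1) (c n) = M ∫ min (k + 1) h dμ + o(M)`. Finally `a M ~ I M`, and each block
adds at most `k + 1` elements, so for `a M ≤ N < a (M + 1)` the count up to `N` is
`(N / I) ∫ min (k + 1) h dμ + o(N)`.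
-/

open Filter MeasureTheory Topology Finset

lemma ncard_setOf_one_le_le_eq_card_filter (P : ℕ → Prop) [DecidablePred P] (N : ℕ) :
    {n : ℕ | 1 ≤ n ∧ n ≤ N ∧ P n}.ncard = #{n ∈ Icc 1 N | P n} := by
  rw [← Set.ncard_coe_finset]
  congr 1
  ext n
  simp [and_assoc]

section PartialSums

variable {c a : ℕ → ℕ} {k : ℕ}

lemma partialSums_eq_sum (ha0 : a 0 = 0) (haS : ∀ n, a (n + 1) = a n + c (n + 1)) (n : ℕ) :
    a n = ∑ i ∈ Icc 1 n, c i := by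
  induction n with
  | zero => simpa using ha0
  | succ n ih => rw [haS, ih, sum_Icc_succ_top (by omega)]

lemma strictMono_of_partialSums (hc : ∀ n, 1 ≤ c n) (haS : ∀ n, a (n + 1) = a n + c (n + 1)) :
    StrictMono a :=
  strictMono_nat_of_lt_succ fun n => by have := hc (n + 1); rw [haS]; omega

lemma exists_eq_add_iff_of_mem_Ioc (haS : ∀ n, a (n + 1) = a n + c (n + 1))
    {M m : ℕ} (hm : m ∈ Ioc (a M) (a (M + 1))) :
    (∃ n t, t ≤ k ∧ m = a n + t) ↔ m ≤ a M + k ∨ m = a (M + 1) := by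
  have ha : Monotone a := monotone_nat_of_le_succ fun n => by rw [haS]; omega
  rw [mem_Ioc] at hm
  constructor
  · rintro ⟨n, t, ht, rfl⟩
    rcases le_or_gt n M with hn | hn
    · have := ha hn; omega
    · have : a (M + 1) ≤ a n := ha hn; omega
  · rintro (hm' | rfl)
    · exact ⟨M, m - a M, by omega, by omega⟩
    · exact ⟨M + 1, 0, Nat.zero_le k, rfl⟩

open Classical in
lemma card_filter_Ioc_partialSums_succ (haS : ∀ n, a (n + 1) = a n + c (n + 1)) (M : ℕ) :
    #{m ∈ Ioc (a M) (a (M + 1)) | ∃ n t, t ≤ k ∧ m = a n + t} = min (k + 1) (c (M + 1)) := by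
  have hM := haS M
  rw [filter_congr fun m hm => exists_eq_add_iff_of_mem_Ioc haS hm]
  rcases le_or_gt (c (M + 1)) (k + 1) with hle | hlt
  · rw [filter_true_of_mem fun m hm => by rw [mem_Ioc] at hm; omega, Nat.card_Ioc]
    omega
  · have : {m ∈ Ioc (a M) (a (M + 1)) | m ≤ a M + k ∨ m = a (M + 1)}
        = insert (a (M + 1)) (Ioc (a M) (a M + k)) := by
      ext m; simp only [mem_filter, mem_Ioc, mem_insert]; omega
    rw [this, card_insert_of_notMem (by rw [mem_Ioc]; omega), Nat.card_Ioc]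
    omega

open Classical in
lemma card_filter_Icc_partialSums (ha0 : a 0 = 0) (haS : ∀ n, a (n + 1) = a n + c (n + 1))
    (M : ℕ) :
    #{m ∈ Icc 1 (a M) | ∃ n t, t ≤ k ∧ m = a n + t} = ∑ n ∈ Icc 1 M, min (k + 1) (c n) := by
  induction M with
  | zero => simp [ha0]
  | succ M ih =>
    have hle : a M ≤ a (M + 1) := by rw [haS]; omega
    have hIcc (N : ℕ) : Icc 1 N = Ioc 0 N := Icc_add_one_left_eq_Ioc 0 N
    rw [sum_Icc_succ_top (by omega), ← ih, ← card_filter_Ioc_partialSums_succ haS, hIcc, hIcc,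
      ← card_union_of_disjoint (disjoint_filter_filter (Ioc_disjoint_Ioc_of_le le_rfl)),
      ← filter_union, Ioc_union_Ioc_eq_Ioc (Nat.zero_le _) hle]

end PartialSums

section Density

variable {a : ℕ → ℕ}

noncomputable def lastIndexLE (a : ℕ → ℕ) (N : ℕ) : ℕ := Nat.findGreatest (fun n => a n ≤ N) N

lemma apply_lastIndexLE_le (ha0 : a 0 = 0) (N : ℕ) : a (lastIndexLE a N) ≤ N :=
  Nat.findGreatest_spec (P := fun n => a n ≤ N) (Nat.zero_le N) (by simp [ha0])

lemma lt_apply_lastIndexLE_succ (ha : StrictMono a) (N : ℕ) : N < a (lastIndexLE a N + 1) := by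
  by_contra! hle
  have := Nat.le_findGreatest (P := fun n => a n ≤ N) ((ha.id_le _).trans hle) hle
  exact (lastIndexLE a N).lt_succ_self.not_ge this

lemma tendsto_lastIndexLE (ha : StrictMono a) : Tendsto (lastIndexLE a) atTop atTop :=
  tendsto_atTop.2 fun K => (eventually_ge_atTop (a K)).mono fun _ hN =>
    Nat.le_findGreatest ((ha.id_le K).trans hN) hN

lemma tendsto_lastIndexLE_div {I : ℝ} (ha0 : a 0 = 0) (ha : StrictMono a) (hI : I ≠ 0)
    (haI : Tendsto (fun n => (a n : ℝ) / n) atTop (𝓝 I)) :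
    Tendsto (fun N => (lastIndexLE a N : ℝ) / N) atTop (𝓝 I⁻¹) := by
  have hinv : Tendsto (fun n : ℕ => (n : ℝ) / a n) atTop (𝓝 I⁻¹) :=
    (haI.inv₀ hI).congr fun n => inv_div _ _
  have hinv_succ : Tendsto (fun n : ℕ => (n : ℝ) / a (n + 1)) atTop (𝓝 I⁻¹) := by
    have := (tendsto_natCast_div_add_atTop (1 : ℝ)).mul (hinv.comp (tendsto_add_atTop_nat 1))
    rw [one_mul] at this
    refine this.congr fun n => ?_
    simp only [Function.comp_apply, Nat.cast_add, Nat.cast_one]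
    exact div_mul_div_cancel₀ (by positivity)
  have hM := tendsto_lastIndexLE ha
  refine tendsto_of_tendsto_of_tendsto_of_le_of_le' (hinv_succ.comp hM) (hinv.comp hM) ?_ ?_
  · filter_upwards [eventually_gt_atTop 0] with N hN
    exact div_le_div_of_nonneg_left (Nat.cast_nonneg _) (by exact_mod_cast hN)
      (by exact_mod_cast (lt_apply_lastIndexLE_succ ha N).le)
  · filter_upwards [hM.eventually_gt_atTop 0] with N hN
    have : 0 < a (lastIndexLE a N) := ha0 ▸ ha hN
    exact div_le_div_of_nonneg_left (Nat.cast_nonneg _) (by exact_mod_cast this)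
      (by exact_mod_cast apply_lastIndexLE_le ha0 N)

theorem tendsto_div_of_tendsto_comp_div {I L : ℝ} (ha0 : a 0 = 0) (ha : StrictMono a)
    (hI : I ≠ 0) (haI : Tendsto (fun n => (a n : ℝ) / n) atTop (𝓝 I))
    {F : ℕ → ℕ} (hF : Monotone F) (C : ℕ) (hFC : ∀ M, F (a (M + 1)) ≤ F (a M) + C)
    (hFL : Tendsto (fun M => (F (a M) : ℝ) / M) atTop (𝓝 L)) :
    Tendsto (fun N => (F N : ℝ) / N) atTop (𝓝 (L / I)) := by
  set M := lastIndexLE a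
  have hM := tendsto_lastIndexLE ha
  have hupper : Tendsto (fun N => ((F (a (M N)) + C : ℕ) : ℝ) / M N) atTop (𝓝 L) := by
    have := hFL.add (tendsto_const_div_atTop_nhds_zero_nat (C : ℝ))
    rw [add_zero] at this
    exact (this.comp hM).congr fun N => by push_cast; rw [Function.comp_apply, add_div]
  have hFM : Tendsto (fun N => (F N : ℝ) / M N) atTop (𝓝 L) := by
    refine tendsto_of_tendsto_of_tendsto_of_le_of_le (hFL.comp hM) hupper (fun N => ?_) fun N => ?_
    · exact div_le_div_of_nonneg_right (Nat.cast_le.2 (hF (apply_lastIndexLE_le ha0 N)))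
        (Nat.cast_nonneg _)
    · exact div_le_div_of_nonneg_right
        (Nat.cast_le.2 ((hF (lt_apply_lastIndexLE_succ ha N).le).trans (hFC (M N))))
        (Nat.cast_nonneg _)
  rw [div_eq_mul_inv]
  refine (hFM.mul (tendsto_lastIndexLE_div ha0 ha hI haI)).congr' ?_
  filter_upwards [hM.eventually_gt_atTop 0] with N hN
  exact div_mul_div_cancel₀ (by positivity)

end Density

section EventuallyConstant

variable {φ : ℕ → ℝ} {K : ℕ}

lemma eq_add_sum_ite_of_forall_le (hφ : ∀ j, K ≤ j → φ j = φ K) (j : ℕ) :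
    φ j = φ K + ∑ m ∈ range K, if j = m then φ m - φ K else 0 := by
  rcases lt_or_ge j K with hj | hj
  · rw [sum_ite_eq, if_pos (mem_range.2 hj)]
    ring
  · rw [sum_eq_zero fun m hm => if_neg (by rw [mem_range] at hm; omega), hφ j hj, add_zero]

lemma tendsto_sum_div_of_tendsto_freq {c : ℕ → ℕ} {p : ℕ → ℝ}
    (hfreq : ∀ m, Tendsto (fun N : ℕ => ({n : ℕ | 1 ≤ n ∧ n ≤ N ∧ c n = m}.ncard : ℝ) / N)
      atTop (𝓝 (p m)))
    (hφ : ∀ j, K ≤ j → φ j = φ K) :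
    Tendsto (fun N : ℕ => (∑ n ∈ Icc 1 N, φ (c n)) / N) atTop
      (𝓝 (φ K + ∑ m ∈ range K, (φ m - φ K) * p m)) := by
  classical
  have hsum (N : ℕ) : ∑ n ∈ Icc 1 N, φ (c n)
      = N * φ K + ∑ m ∈ range K, (φ m - φ K) * #{n ∈ Icc 1 N | c n = m} := by
    simp_rw [sum_congr rfl fun n _ => eq_add_sum_ite_of_forall_le hφ (c n), sum_add_distrib,
      sum_const, Nat.card_Icc, add_tsub_cancel_right, nsmul_eq_mul, sum_comm (s := Icc 1 N),
      ← sum_filter, sum_const, nsmul_eq_mul, mul_comm]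
  have hlim := tendsto_const_nhds (x := φ K).add
    (tendsto_finsetSum (range K) fun m _ => (hfreq m).const_mul (φ m - φ K))
  refine hlim.congr' ?_
  filter_upwards [eventually_ne_atTop 0] with N hN
  simp only [ncard_setOf_one_le_le_eq_card_filter]
  rw [hsum, add_div, mul_div_cancel_left₀ _ (Nat.cast_ne_zero.2 hN), sum_div]
  simp only [mul_div_assoc]

lemma integral_comp_eq_add_sum_of_forall_le {X : Type*} [MeasurableSpace X] {μ : Measure X}
    [IsProbabilityMeasure μ] {h : X → ℕ} (hmeas : Measurable h) (hφ : ∀ j, K ≤ j → φ j = φ K) :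
    ∫ x, φ (h x) ∂μ = φ K + ∑ m ∈ range K, (φ m - φ K) * μ.real (h ⁻¹' {m}) := by
  have hind (m : ℕ) : (fun x => if h x = m then φ m - φ K else 0)
      = (h ⁻¹' {m}).indicator fun _ => φ m - φ K := by
    funext x
    by_cases hx : h x = m <;> simp [hx]
  have hint (m : ℕ) : Integrable (fun x => if h x = m then φ m - φ K else 0) μ := by
    rw [hind]
    exact (integrable_const _).indicator (hmeas (measurableSet_singleton m))
  rw [integral_congr_ae (Eventually.of_forall fun x => eq_add_sum_ite_of_forall_le hφ (h x)),
    integral_add (integrable_const _) (integrable_finsetSum _ fun m _ => hint m),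
    integral_finsetSum _ fun m _ => hint m, integral_const, probReal_univ, one_smul]
  congr 1
  refine sum_congr rfl fun m _ => ?_
  rw [hind, integral_indicator_const _ (hmeas (measurableSet_singleton m)), smul_eq_mul, mul_comm]

end EventuallyConstant

lemma integral_natCast_min_eq_sub {X : Type*} [MeasurableSpace X] {μ : Measure X} {h : X → ℕ}
    (hmeas : Measurable h) (hInt : Integrable (fun x => (h x : ℝ)) μ) (K : ℕ) :
    ∫ x, ((min K (h x) : ℕ) : ℝ) ∂μ
      = ∫ x, (h x : ℝ) ∂μ - ∫ x in {x | K < h x}, ((h x : ℝ) - K) ∂μ := by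
  have hmin : Integrable (fun x => ((min K (h x) : ℕ) : ℝ)) μ :=
    hInt.mono (by fun_prop) (Eventually.of_forall fun x => by
      rw [Real.norm_natCast, Real.norm_natCast]; exact_mod_cast min_le_right _ _)
  have hexcess : {x | K < h x}.indicator (fun x => (h x : ℝ) - K)
      = fun x => (h x : ℝ) - ((min K (h x) : ℕ) : ℝ) := by
    funext x
    by_cases hx : K < h x
    · simp [hx, min_eq_left hx.le]
    · simp [hx, min_eq_right (not_lt.1 hx)]
  rw [← integral_indicator (measurableSet_lt measurable_const hmeas), hexcess,
    integral_sub hInt hmin, sub_sub_cancel]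

theorem stmt_9_general {X : Type*} [MeasurableSpace X] (μ : Measure X) [IsProbabilityMeasure μ]
    (T : X → X)
    (h : X → ℕ) (hmeas : Measurable h) (h1 : ∀ x, 1 ≤ h x)
    (hInt : Integrable (fun x => (h x : ℝ)) μ)
    (I : ℝ) (hI : ∫ x, (h x : ℝ) ∂μ = I)
    (x : X) (c : ℕ → ℕ) (hc : ∀ n, c n = h (T^[n] x))
    (hfreq : ∀ m : ℕ,
      Tendsto (fun N : ℕ => ({n : ℕ | 1 ≤ n ∧ n ≤ N ∧ c n = m}.ncard : ℝ) / N)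
        atTop (𝓝 ((μ (h ⁻¹' {m})).toReal)))
    (hces : Tendsto (fun N : ℕ => (∑ n ∈ Finset.Icc 1 N, (c n : ℝ)) / N) atTop (𝓝 I))
    (a : ℕ → ℕ) (ha0 : a 0 = 0) (haS : ∀ n, a (n + 1) = a n + c (n + 1))
    (k : ℕ) :
    Tendsto (fun N : ℕ =>
        ({m : ℕ | 1 ≤ m ∧ m ≤ N ∧ ∃ n t : ℕ, t ≤ k ∧ m = a n + t}.ncard : ℝ) / N)
      atTop (𝓝 ((1 / I) * ∫ x, ((min (k + 1) (h x) : ℕ) : ℝ) ∂μ)) ∧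
    (1 / I) * ∫ x, ((min (k + 1) (h x) : ℕ) : ℝ) ∂μ
      = 1 - (1 / I) * ∫ x in {x | k + 1 < h x}, ((h x : ℝ) - (k + 1)) ∂μ := by
  classical
  have ha := strictMono_of_partialSums (fun n => hc n ▸ h1 _) haS
  have hI1 : 1 ≤ I := by
    simpa [← hI] using integral_mono (integrable_const 1) hInt fun x => (Nat.one_le_cast.2 (h1 x))
  have haI : Tendsto (fun n => (a n : ℝ) / n) atTop (𝓝 I) :=
    hces.congr fun N => by rw [partialSums_eq_sum ha0 haS N, Nat.cast_sum]
  set φ : ℕ → ℝ := fun j => ((min (k + 1) j : ℕ) : ℝ)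
  have hφ (j : ℕ) (hj : k + 1 ≤ j) : φ j = φ (k + 1) := by simp only [φ, min_eq_left hj, min_self]
  set F : ℕ → ℕ := fun N => #{m ∈ Icc 1 N | ∃ n t, t ≤ k ∧ m = a n + t}
  have hFa (M : ℕ) : F (a M) = ∑ n ∈ Icc 1 M, min (k + 1) (c n) :=
    card_filter_Icc_partialSums ha0 haS M
  have hFL : Tendsto (fun M => (F (a M) : ℝ) / M) atTop (𝓝 (∫ x, φ (h x) ∂μ)) := by
    rw [integral_comp_eq_add_sum_of_forall_le hmeas hφ]
    exact (tendsto_sum_div_of_tendsto_freq hfreq hφ).congr fun M => by rw [hFa, Nat.cast_sum]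
  have hdens := tendsto_div_of_tendsto_comp_div ha0 ha (by linarith) haI (F := F)
    (fun N N' hN => card_le_card (filter_subset_filter _ (Icc_subset_Icc_right hN))) (k + 1)
    (fun M => by rw [hFa, hFa, sum_Icc_succ_top (by omega)]; omega) hFL
  refine ⟨?_, ?_⟩
  · simpa only [ncard_setOf_one_le_le_eq_card_filter, one_div_mul_eq_div] using hdens
  · rw [integral_natCast_min_eq_sub hmeas hInt, hI]
    push_cast
    field_simp

/-- Density of the set `A_k = A ∪ (A+1) ∪ ⋯ ∪ (A+k)`, where `A` is the set of partial
sums of a dynamically generated sequence `c n = h (Tⁿ x)` of positive integers with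
`∫ h dμ = I`: the natural density of `A_k` exists and equals
`(1/I) ∫ min (k+1) h dμ = 1 - (1/I) ∫_{h > k+1} (h - k - 1) dμ`. -/
theorem stmt_9 {X : Type*} [MeasurableSpace X] (μ : Measure X) [IsProbabilityMeasure μ]
    (g : ℕ) (hg : 2 ≤ g)
    (T : X → X) (hT : MeasurePreserving T μ μ)
    (h : X → ℕ) (hmeas : Measurable h) (h1 : ∀ x, 1 ≤ h x)
    (hInt : Integrable (fun x => (h x : ℝ)) μ)
    (I : ℝ) (hI : ∫ x, (h x : ℝ) ∂μ = I)
    (x : X) (c : ℕ → ℕ) (hc : ∀ n, c n = h (T^[n] x))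
    (q : ℕ → ℕ) (hq : ∀ n, q n = g ^ c n)
    (hfreq : ∀ m : ℕ,
      Tendsto (fun N : ℕ => ({n : ℕ | 1 ≤ n ∧ n ≤ N ∧ c n = m}.ncard : ℝ) / N)
        atTop (𝓝 ((μ (h ⁻¹' {m})).toReal)))
    (hces : Tendsto (fun N : ℕ => (∑ n ∈ Finset.Icc 1 N, (c n : ℝ)) / N) atTop (𝓝 I))
    (a : ℕ → ℕ) (ha0 : a 0 = 0) (haS : ∀ n, a (n + 1) = a n + c (n + 1))
    (k : ℕ) :
    Tendsto (fun N : ℕ =>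
        ({m : ℕ | 1 ≤ m ∧ m ≤ N ∧ ∃ n t : ℕ, t ≤ k ∧ m = a n + t}.ncard : ℝ) / N)
      atTop (𝓝 ((1 / I) * ∫ x, ((min (k + 1) (h x) : ℕ) : ℝ) ∂μ)) ∧
    (1 / I) * ∫ x, ((min (k + 1) (h x) : ℕ) : ℝ) ∂μ
      = 1 - (1 / I) * ∫ x in {x | k + 1 < h x}, ((h x : ℝ) - (k + 1)) ∂μ :=
  stmt_9_general μ T h hmeas h1 hInt I hI x c hc hfreq hces a ha0 haS k
end

section
/- For every dynamically generated basic sequence Q, the set of Q-ratio normal numbers coincides with the set of Q-normal numbers: 𝓡𝓝(Q) = 𝓝(Q). -/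
open Filter Topology

/-- `q 1 * q 2 * ⋯ * q n`. -/
noncomputable def prodQ (Q : ℕ → ℕ) (n : ℕ) : ℕ := ∏ i ∈ Finset.Icc 1 n, Q i

/-- The `n`-th digit (`n ≥ 1`) of the `Q`-Cantor series expansion of `y`. -/
noncomputable def qdigit (Q : ℕ → ℕ) (y : ℝ) (n : ℕ) : ℕ :=
  (⌊(Q n : ℝ) * Int.fract ((prodQ Q (n - 1) : ℝ) * y)⌋).toNat

/-- Expected number `Q_n(D)` of occurrences of the digit block `D`. -/
noncomputable def QnD (Q : ℕ → ℕ) {ℓ : ℕ} (D : Fin ℓ → ℕ) (n : ℕ) : ℝ :=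
  ∑ j ∈ Finset.Icc 1 n,
    (if ∀ i : Fin ℓ, D i < Q (j + (i : ℕ)) then (∏ i : Fin ℓ, (Q (j + (i : ℕ)) : ℝ))⁻¹ else 0)

/-- Number `N_n^Q(D, y)` of occurrences of the digit block `D` among the first `n`
positions of the `Q`-Cantor expansion of `y`. -/
noncomputable def NnD (Q : ℕ → ℕ) (y : ℝ) {ℓ : ℕ} (D : Fin ℓ → ℕ) (n : ℕ) : ℝ :=
  ({j : ℕ | 1 ≤ j ∧ j ≤ n ∧ ∀ i : Fin ℓ, qdigit Q y (j + (i : ℕ)) = D i}.ncard : ℝ)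

/-- `y` is `Q`-normal. -/
def QNormalNum (Q : ℕ → ℕ) (y : ℝ) : Prop :=
  ∀ (ℓ : ℕ) (D : Fin ℓ → ℕ), Tendsto (fun n => QnD Q D n) atTop atTop →
    Tendsto (fun n => NnD Q y D n / QnD Q D n) atTop (𝓝 1)

/-- `y` is `Q`-ratio normal. -/
def QRatioNormalNum (Q : ℕ → ℕ) (y : ℝ) : Prop :=
  ∀ (ℓ : ℕ) (D₁ D₂ : Fin ℓ → ℕ),
    Tendsto (fun n => min (QnD Q D₁ n) (QnD Q D₂ n)) atTop atTop →
    Tendsto (fun n => (NnD Q y D₁ n / QnD Q D₁ n) / (NnD Q y D₂ n / QnD Q D₂ n))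
      atTop (𝓝 1)

/-!
Normal numbers are ratio normal by taking the quotient of the two limits. Conversely, put
`r n = N_n(D) / Q_n(D)` and fix a finite set `W` of words of `Q` of positive density with total
density `σ` close to `1`; let `F` be the blocks lying letterwise below some word of `W`. Each
`D' ∈ F` has `Q_n(D') → ∞`, so ratio normality gives `N_n(D') ≈ r n * Q_n(D')`, hence
`∑_F N_n ≈ r n * ∑_F Q_n`. Both sums lie between `σ n` and `n`: every position contributes
at most `1` to each, and a position where the word of `Q` lies in `W` contributes exactly `1`
(its digit block is in `F`, and its expected contributions sum to `1`). So `r n` is trapped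
between about `σ` and `σ⁻¹`, and `σ` can be taken arbitrarily close to `1`.
-/

open Finset

def window (f : ℕ → ℕ) (ℓ j : ℕ) : Fin ℓ → ℕ := fun i => f (j + i)

def windowCount (f : ℕ → ℕ) {ℓ : ℕ} (W : Finset (Fin ℓ → ℕ)) (n : ℕ) : ℕ :=
  #{j ∈ Icc 1 n | window f ℓ j ∈ W}

def blocksBelow {ℓ : ℕ} (W : Finset (Fin ℓ → ℕ)) : Finset (Fin ℓ → ℕ) :=
  W.biUnion fun w => Fintype.piFinset fun i => range (w i)

section Windows

variable {ℓ : ℕ}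

lemma windowCount_singleton (f : ℕ → ℕ) (w : Fin ℓ → ℕ) (n : ℕ) :
    windowCount f {w} n = {j : ℕ | 1 ≤ j ∧ j ≤ n ∧ ∀ i : Fin ℓ, f (j + i) = w i}.ncard := by
  rw [windowCount, ← Set.ncard_coe_finset]
  congr 1
  ext j
  simp [window, funext_iff, and_assoc]

lemma windowCount_le (f : ℕ → ℕ) (W : Finset (Fin ℓ → ℕ)) (n : ℕ) : windowCount f W n ≤ n :=
  (card_filter_le _ _).trans (by simp)

lemma sum_windowCount_singleton (f : ℕ → ℕ) (W : Finset (Fin ℓ → ℕ)) (n : ℕ) :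
    ∑ w ∈ W, windowCount f {w} n = windowCount f W n := by
  simp only [windowCount, mem_singleton]
  exact sum_card_fiberwise_eq_card_filter _ _ _

lemma windowCount_le_windowCount {f g : ℕ → ℕ} {V W : Finset (Fin ℓ → ℕ)}
    (h : ∀ j, window f ℓ j ∈ V → window g ℓ j ∈ W) (n : ℕ) :
    windowCount f V n ≤ windowCount g W n :=
  card_le_card (monotone_filter_right _ fun j _ => h j)

lemma mem_blocksBelow {W : Finset (Fin ℓ → ℕ)} {D : Fin ℓ → ℕ} :
    D ∈ blocksBelow W ↔ ∃ w ∈ W, ∀ i, D i < w i := by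
  simp [blocksBelow, Fintype.mem_piFinset]

end Windows

section Counts

variable {Q : ℕ → ℕ} {ℓ : ℕ}

lemma qdigit_lt {n : ℕ} (hQ : 0 < Q n) (y : ℝ) : qdigit Q y n < Q n := by
  have hfloor : ⌊(Q n : ℝ) * Int.fract ((prodQ Q (n - 1) : ℝ) * y)⌋ < Q n := by
    rw [Int.floor_lt]
    push_cast
    exact mul_lt_of_lt_one_right (by exact_mod_cast hQ) (Int.fract_lt_one _)
  rw [qdigit]
  omega

lemma NnD_eq_windowCount (y : ℝ) (D : Fin ℓ → ℕ) (n : ℕ) :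
    NnD Q y D n = windowCount (qdigit Q y) {D} n := by
  rw [NnD, windowCount_singleton]

lemma NnD_nonneg (y : ℝ) (D : Fin ℓ → ℕ) (n : ℕ) : 0 ≤ NnD Q y D n :=
  Nat.cast_nonneg _

lemma sum_NnD_eq_windowCount (y : ℝ) (F : Finset (Fin ℓ → ℕ)) (n : ℕ) :
    ∑ D ∈ F, NnD Q y D n = windowCount (qdigit Q y) F n := by
  rw [← sum_windowCount_singleton, Nat.cast_sum]
  exact sum_congr rfl fun D _ => NnD_eq_windowCount y D n

lemma sum_NnD_le (y : ℝ) (F : Finset (Fin ℓ → ℕ)) (n : ℕ) : ∑ D ∈ F, NnD Q y D n ≤ n := by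
  rw [sum_NnD_eq_windowCount]
  exact_mod_cast windowCount_le _ _ _

lemma windowCount_le_sum_NnD (hQ : ∀ n, 0 < Q n) (y : ℝ) (W : Finset (Fin ℓ → ℕ)) (n : ℕ) :
    (windowCount Q W n : ℝ) ≤ ∑ D ∈ blocksBelow W, NnD Q y D n := by
  rw [sum_NnD_eq_windowCount]
  exact_mod_cast windowCount_le_windowCount (f := Q) (g := qdigit Q y)
    (fun j hj => mem_blocksBelow.2 ⟨window Q ℓ j, hj, fun i => qdigit_lt (hQ (j + i)) y⟩) n

lemma QnD_nonneg (D : Fin ℓ → ℕ) (n : ℕ) : 0 ≤ QnD Q D n :=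
  sum_nonneg fun j _ => by split_ifs <;> positivity

/-- The chance that the digit block at position `j` lies in `F` when the digits are drawn
independently and uniformly. -/
noncomputable def blockMass (Q : ℕ → ℕ) (F : Finset (Fin ℓ → ℕ)) (j : ℕ) : ℝ :=
  #{D ∈ F | ∀ i : Fin ℓ, D i < Q (j + i)} / ∏ i : Fin ℓ, (Q (j + i) : ℝ)

lemma sum_QnD_eq_sum_blockMass (F : Finset (Fin ℓ → ℕ)) (n : ℕ) :
    ∑ D ∈ F, QnD Q D n = ∑ j ∈ Icc 1 n, blockMass Q F j := by
  simp only [QnD, blockMass]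
  rw [sum_comm]
  refine sum_congr rfl fun j _ => ?_
  rw [← sum_filter, sum_const, nsmul_eq_mul, div_eq_mul_inv]

lemma blockMass_le_one (F : Finset (Fin ℓ → ℕ)) (j : ℕ) : blockMass Q F j ≤ 1 := by
  refine div_le_one_of_le₀ ?_ (by positivity)
  have hsub : {D ∈ F | ∀ i : Fin ℓ, D i < Q (j + i)} ⊆
      Fintype.piFinset fun i : Fin ℓ => range (Q (j + i)) := fun D hD => by
    simpa [Fintype.mem_piFinset] using (mem_filter.1 hD).2
  exact_mod_cast (card_le_card hsub).trans_eq (by simp)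

lemma blockMass_blocksBelow_eq_one (hQ : ∀ n, 0 < Q n) {W : Finset (Fin ℓ → ℕ)} {j : ℕ}
    (hj : window Q ℓ j ∈ W) : blockMass Q (blocksBelow W) j = 1 := by
  have hfilter : {D ∈ blocksBelow W | ∀ i : Fin ℓ, D i < Q (j + i)} =
      Fintype.piFinset fun i : Fin ℓ => range (Q (j + i)) := by
    ext D
    simp only [mem_filter, Fintype.mem_piFinset, mem_range, and_iff_right_iff_imp]
    exact fun hD => mem_blocksBelow.2 ⟨_, hj, hD⟩
  rw [blockMass, hfilter, Fintype.card_piFinset]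
  simp only [card_range, Nat.cast_prod]
  exact div_self (prod_ne_zero_iff.2 fun i _ => by exact_mod_cast (hQ _).ne')

lemma sum_QnD_le (F : Finset (Fin ℓ → ℕ)) (n : ℕ) : ∑ D ∈ F, QnD Q D n ≤ n := by
  rw [sum_QnD_eq_sum_blockMass]
  calc _ ≤ ∑ _ ∈ Icc 1 n, (1 : ℝ) := sum_le_sum fun j _ => blockMass_le_one F j
    _ = n := by simp

lemma windowCount_le_sum_QnD (hQ : ∀ n, 0 < Q n) (W : Finset (Fin ℓ → ℕ)) (n : ℕ) :
    (windowCount Q W n : ℝ) ≤ ∑ D ∈ blocksBelow W, QnD Q D n := by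
  rw [sum_QnD_eq_sum_blockMass, windowCount, card_eq_sum_ones, Nat.cast_sum, Nat.cast_one]
  calc _ = ∑ j ∈ Icc 1 n with window Q ℓ j ∈ W, blockMass Q (blocksBelow W) j :=
      sum_congr rfl fun j hj => (blockMass_blocksBelow_eq_one hQ (mem_filter.1 hj).2).symm
    _ ≤ _ := sum_le_sum_of_subset_of_nonneg (filter_subset _ _) fun _ _ _ => by
      unfold blockMass; positivity

end Counts

section Densities

variable {Q : ℕ → ℕ} {ℓ : ℕ} {d : (Fin ℓ → ℕ) → ℝ}

def HasWindowDensity (Q : ℕ → ℕ) {ℓ : ℕ} (d : (Fin ℓ → ℕ) → ℝ) : Prop :=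
  ∀ w, Tendsto (fun n : ℕ => (windowCount Q {w} n : ℝ) / n) atTop (𝓝 (d w))

lemma HasWindowDensity.nonneg (hd : HasWindowDensity Q d) (w : Fin ℓ → ℕ) : 0 ≤ d w :=
  ge_of_tendsto' (hd w) fun _ => by positivity

lemma HasWindowDensity.tendsto_windowCount_div (hd : HasWindowDensity Q d)
    (W : Finset (Fin ℓ → ℕ)) :
    Tendsto (fun n : ℕ => (windowCount Q W n : ℝ) / n) atTop (𝓝 (∑ w ∈ W, d w)) := by
  refine (tendsto_finsetSum W fun w _ => hd w).congr fun n => ?_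
  rw [← sum_windowCount_singleton, Nat.cast_sum, sum_div]

lemma HasWindowDensity.tendsto_QnD_atTop (hd : HasWindowDensity Q d) {w D : Fin ℓ → ℕ}
    (hw : 0 < d w) (hD : ∀ i, D i < w i) : Tendsto (fun n => QnD Q D n) atTop atTop := by
  have hcount : Tendsto (fun n => (windowCount Q {w} n : ℝ)) atTop atTop :=
    Tendsto.num tendsto_natCast_atTop_atTop hw (hd w)
  have hprod : 0 < ∏ i, (w i : ℝ) :=
    prod_pos fun i _ => by exact_mod_cast (Nat.zero_le _).trans_lt (hD i)
  refine tendsto_atTop_mono (fun n => ?_) (hcount.atTop_mul_const (inv_pos.2 hprod))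
  rw [windowCount, card_eq_sum_ones, Nat.cast_sum, Nat.cast_one, sum_mul, one_mul, QnD]
  calc _ = ∑ j ∈ Icc 1 n with window Q ℓ j ∈ ({w} : Finset (Fin ℓ → ℕ)),
          (if ∀ i : Fin ℓ, D i < Q (j + i) then (∏ i : Fin ℓ, (Q (j + i) : ℝ))⁻¹ else 0) := by
        refine sum_congr rfl fun j hj => ?_
        have hj : window Q ℓ j = w := mem_singleton.1 (mem_filter.1 hj).2
        simp only [← hj, window] at hD ⊢
        rw [if_pos hD]
    _ ≤ _ := sum_le_sum_of_subset_of_nonneg (filter_subset _ _)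
      fun _ _ _ => by split_ifs <;> positivity

end Densities

lemma exists_finset_pos_lt_sum {ι : Type*} {d : ι → ℝ} {a δ : ℝ} (hd : ∀ i, 0 ≤ d i)
    (h : HasSum d a) (hδ : δ < a) : ∃ W : Finset ι, (∀ i ∈ W, 0 < d i) ∧ δ < ∑ i ∈ W, d i := by
  obtain ⟨W, hW⟩ := (h.eventually (lt_mem_nhds hδ)).exists
  refine ⟨{i ∈ W | 0 < d i}, fun i hi => (mem_filter.1 hi).2, ?_⟩
  rwa [sum_filter_of_ne fun i _ hi => (hd i).lt_of_ne' hi]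

lemma tendsto_nhds_one_of_forall_eventually_mem_Ioo {α : Type*} {l : Filter α} {r : α → ℝ}
    (h : ∀ δ, 0 < δ → δ < 1 → ∀ᶠ x in l, r x ∈ Set.Ioo δ δ⁻¹) : Tendsto r l (𝓝 1) := by
  rw [Metric.tendsto_nhds]
  intro ε hε
  have hlt : 1 - ε < (1 + ε)⁻¹ := by
    rw [← one_div, lt_div_iff₀ (by positivity)]
    nlinarith
  filter_upwards [h (1 + ε)⁻¹ (by positivity) (inv_lt_one_of_one_lt₀ (by linarith))]
    with x ⟨hlo, hhi⟩
  rw [inv_inv] at hhi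
  rw [Real.dist_eq, abs_sub_lt_iff]
  constructor <;> linarith

lemma mem_Icc_mul_of_div_mem_Ioo {a b c C : ℝ} (hb : 0 ≤ b) (hc : 0 < c)
    (h : a / b ∈ Set.Ioo c C) : a ∈ Set.Icc (c * b) (C * b) := by
  have hb : 0 < b := hb.lt_of_ne' fun h0 => by simp [h0] at h; linarith [h.1]
  exact ⟨((lt_div_iff₀ hb).1 h.1).le, ((div_lt_iff₀ hb).1 h.2).le⟩

lemma mem_Ioo_of_mem_Ioc_of_mem_Icc {η n r sN sQ : ℝ} (hη : 0 < η) (hn : 0 < n) (hr : 0 ≤ r)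
    (hN : sN ∈ Set.Ioc (η * n) n) (hQ : sQ ∈ Set.Ioc (η * n) n)
    (h : sN ∈ Set.Icc (η * (sQ * r)) (η⁻¹ * (sQ * r))) : r ∈ Set.Ioo (η * η) (η * η)⁻¹ := by
  obtain ⟨hN, hNn⟩ := hN
  obtain ⟨hQ, hQn⟩ := hQ
  obtain ⟨hlo, hhi⟩ := h
  have hsQ : 0 < sQ := by nlinarith
  rw [inv_mul_eq_div, le_div_iff₀ hη] at hhi
  refine ⟨?_, ?_⟩
  · nlinarith [mul_le_mul_of_nonneg_right hQn hr]
  · rw [← one_div, lt_div_iff₀ (by positivity)]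
    nlinarith [mul_lt_mul_of_pos_left hQ hη]

section Normality

variable {Q : ℕ → ℕ} {y : ℝ}

lemma QRatioNormalNum.eventually_sum_NnD_mem_Icc (h : QRatioNormalNum Q y) {ℓ : ℕ}
    {D : Fin ℓ → ℕ} (hD : Tendsto (fun n => QnD Q D n) atTop atTop) {F : Finset (Fin ℓ → ℕ)}
    (hF : ∀ D' ∈ F, Tendsto (fun n => QnD Q D' n) atTop atTop) {η : ℝ} (hη : 0 < η)
    (hη1 : η < 1) :
    ∀ᶠ n in atTop, ∑ D' ∈ F, NnD Q y D' n ∈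
      Set.Icc (η * ((∑ D' ∈ F, QnD Q D' n) * (NnD Q y D n / QnD Q D n)))
        (η⁻¹ * ((∑ D' ∈ F, QnD Q D' n) * (NnD Q y D n / QnD Q D n))) := by
  have hratio : ∀ᶠ n in atTop, ∀ D' ∈ F,
      NnD Q y D' n / (QnD Q D' n * (NnD Q y D n / QnD Q D n)) ∈ Set.Ioo η η⁻¹ := by
    refine (eventually_all_finset F).2 fun D' hD' => ?_
    have h₁ := h ℓ D' D (tendsto_inf_atTop _ (hF D' hD') hD)
    simp only [div_div] at h₁
    exact h₁.eventually (Ioo_mem_nhds hη1 ((one_lt_inv₀ hη).2 hη1))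
  filter_upwards [hratio] with n hn
  have hbounds := fun D' hD' => mem_Icc_mul_of_div_mem_Ioo
    (mul_nonneg (QnD_nonneg D' n) (div_nonneg (NnD_nonneg y D n) (QnD_nonneg D n))) hη
    (hn D' hD')
  simp only [sum_mul, mul_sum]
  exact ⟨sum_le_sum fun D' hD' => (hbounds D' hD').1, sum_le_sum fun D' hD' => (hbounds D' hD').2⟩

theorem qRatioNormalNum_of_qNormalNum (h : QNormalNum Q y) : QRatioNormalNum Q y := by
  intro ℓ D₁ D₂ hmin
  have h₁ := h ℓ D₁ (tendsto_atTop_mono (fun n => min_le_left _ _) hmin)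
  have h₂ := h ℓ D₂ (tendsto_atTop_mono (fun n => min_le_right _ _) hmin)
  simpa only [div_one, Pi.div_def] using h₁.div h₂ one_ne_zero

theorem qNormalNum_of_qRatioNormalNum (hQ : ∀ n, 0 < Q n) {dens : ∀ k : ℕ, (Fin k → ℕ) → ℝ}
    (hdens : ∀ k, HasWindowDensity Q (dens k)) (hone : ∀ k, ∑' w : Fin k → ℕ, dens k w = 1)
    (h : QRatioNormalNum Q y) : QNormalNum Q y := by
  intro ℓ D hD
  refine tendsto_nhds_one_of_forall_eventually_mem_Ioo fun δ hδ0 hδ1 => ?_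
  obtain ⟨η, hη0, hη1, rfl⟩ : ∃ η, 0 < η ∧ η < 1 ∧ η * η = δ :=
    ⟨√δ, Real.sqrt_pos.2 hδ0, (Real.sqrt_lt' one_pos).2 (by rwa [one_pow]),
      Real.mul_self_sqrt hδ0.le⟩
  have hsum : HasSum (dens ℓ) 1 := by
    have hs : Summable (dens ℓ) := by
      by_contra hs
      simpa [tsum_eq_zero_of_not_summable hs] using hone ℓ
    simpa [hone ℓ] using hs.hasSum
  obtain ⟨W, hWpos, hηW⟩ := exists_finset_pos_lt_sum (hdens ℓ).nonneg hsum hη1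
  have hF : ∀ D' ∈ blocksBelow W, Tendsto (fun n => QnD Q D' n) atTop atTop := fun D' hD' => by
    obtain ⟨w, hw, hlt⟩ := mem_blocksBelow.1 hD'
    exact (hdens ℓ).tendsto_QnD_atTop (hWpos w hw) hlt
  filter_upwards [h.eventually_sum_NnD_mem_Icc hD hF hη0 hη1,
    ((hdens ℓ).tendsto_windowCount_div W).eventually (lt_mem_nhds hηW),
    eventually_gt_atTop 0] with n hsandwich hW hn
  have hn : (0 : ℝ) < n := by exact_mod_cast hn
  rw [lt_div_iff₀ hn] at hW
  exact mem_Ioo_of_mem_Ioc_of_mem_Icc hη0 hn (div_nonneg (NnD_nonneg y D n) (QnD_nonneg D n))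
    ⟨hW.trans_le (windowCount_le_sum_NnD hQ y W n), sum_NnD_le y _ n⟩
    ⟨hW.trans_le (windowCount_le_sum_QnD hQ W n), sum_QnD_le _ n⟩ hsandwich

end Normality

theorem stmt_19_general (Q : ℕ → ℕ) (hQ : ∀ n, 2 ≤ Q n)
    (dens : ∀ k : ℕ, (Fin k → ℕ) → ℝ)
    (hdens : ∀ (k : ℕ) (w : Fin k → ℕ),
      Tendsto (fun N : ℕ =>
        ({n : ℕ | 1 ≤ n ∧ n ≤ N ∧ ∀ i : Fin k, Q (n + (i : ℕ)) = w i}.ncard : ℝ) / N)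
        atTop (𝓝 (dens k w)))
    (hone : ∀ k : ℕ, ∑' w : Fin k → ℕ, dens k w = 1)
    (y : ℝ) :
    QRatioNormalNum Q y ↔ QNormalNum Q y :=
  ⟨qNormalNum_of_qRatioNormalNum (fun n => (hQ n).trans_lt' two_pos)
      (fun k w => by simpa only [windowCount_singleton] using hdens k w) hone,
    qRatioNormalNum_of_qNormalNum⟩

/-- For a dynamically generated basic sequence `Q` (all word densities exist, words of
density zero do not occur, and the densities of words of each length sum to one), ratio
normality and normality coincide: `𝓡𝓝(Q) = 𝓝(Q)`. -/
theorem stmt_19 (Q : ℕ → ℕ) (hQ : ∀ n, 2 ≤ Q n)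
    (dens : ∀ k : ℕ, (Fin k → ℕ) → ℝ)
    (hdens : ∀ (k : ℕ) (w : Fin k → ℕ),
      Tendsto (fun N : ℕ =>
        ({n : ℕ | 1 ≤ n ∧ n ≤ N ∧ ∀ i : Fin k, Q (n + (i : ℕ)) = w i}.ncard : ℝ) / N)
        atTop (𝓝 (dens k w)))
    (hzero : ∀ (k : ℕ) (w : Fin k → ℕ), dens k w = 0 →
      ∀ n : ℕ, ¬ ∀ i : Fin k, Q (n + (i : ℕ)) = w i)
    (hone : ∀ k : ℕ, ∑' w : Fin k → ℕ, dens k w = 1)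
    (y : ℝ) (hy : y ∈ Set.Ico (0:ℝ) 1) :
    QRatioNormalNum Q y ↔ QNormalNum Q y :=
  stmt_19_general Q hQ dens hdens hone y
end
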